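/- arXiv:2011.13138 — 3 statements merged into one kernel-verified Lean document; each statement's English description precedes it below -/
import Mathlib

section
/- Let n = 2m and λ = (n−k, k) with n−k ≥ k, and let t ≥ 1 satisfy 2t ≤ k and 2t < m. Let W = ⟨e_1, …, e_t, f_1, …, f_t⟩ ⊆ V_λ. Then: (1) W is isotropic for β_λ and W^⊥ = ⟨e_1, …, e_{n−k−t}, f_1, …, f_{k−t}⟩; (2) setting ν = (n−k−2t, k−2t) and ι = √−1 if t is odd, ι = 1 if t is even, the linear map Q : W^⊥/W → V_ν determined by Q(e_{t+i} + W) = ι·e_i for 1 ≤ i ≤ n−k−2t and Q(f_{t+j} + W) = ι·f_j for 1 ≤ j ≤ k−2t is a linear isomorphism satisfying β̄_λ(u, v) = β_ν(Q u, Q v) for all u, v ∈ W^⊥/W; (3) x_λ(W) ⊆ W and x_λ(W^⊥) ⊆ W^⊥, so the induced map x̄_λ on W^⊥/W is defined, and Q ∘ x̄_λ = x_ν ∘ Q. -/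
open Complex Submodule

noncomputable section

/-- `V p q` is the vector space `ℂ^(p+q)` with coordinates indexed by `Fin p ⊕ Fin q`,
corresponding to the basis `e_1, …, e_p, f_1, …, f_q` of `V_λ` for `λ = (p, q)`. -/
abbrev V (p q : ℕ) := (Fin p ⊕ Fin q) → ℂ

/-- The basis vector `e_i` (1-based index `i`; it is `0` if `i` is out of range). -/
def ee (p q : ℕ) (i : ℕ) : V p q :=
  Sum.elim (fun j => if (j : ℕ) + 1 = i then 1 else 0) (fun _ => 0)

/-- The basis vector `f_j` (1-based index `j`; it is `0` if `j` is out of range). -/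
def ff (p q : ℕ) (i : ℕ) : V p q :=
  Sum.elim (fun _ => 0) (fun j => if (j : ℕ) + 1 = i then 1 else 0)

/-- The nilpotent endomorphism `x_λ` with `x(e_i) = e_{i-1}`, `x(f_j) = f_{j-1}`. -/
def xmap (p q : ℕ) : V p q →ₗ[ℂ] V p q where
  toFun v := Sum.elim
    (fun j => if h : (j : ℕ) + 1 < p then v (Sum.inl ⟨(j : ℕ) + 1, h⟩) else 0)
    (fun j => if h : (j : ℕ) + 1 < q then v (Sum.inr ⟨(j : ℕ) + 1, h⟩) else 0)
  map_add' u v := by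
    funext s; cases s <;> dsimp <;> split <;> simp
  map_smul' c v := by
    funext s; cases s <;> dsimp <;> split <;> simp

/-- The Gram matrix of the bilinear form `β_λ` for `λ = (p, q)` (0-based indices). -/
def gram (p q : ℕ) : Matrix (Fin p ⊕ Fin q) (Fin p ⊕ Fin q) ℂ :=
  fun s t =>
    match s, t with
    | Sum.inl i, Sum.inl j =>
        if p = q then 0 else if (i : ℕ) + (j : ℕ) + 2 = p + 1 then (-1 : ℂ) ^ (i : ℕ) else 0
    | Sum.inl i, Sum.inr j =>
        if p = q then (if (i : ℕ) + (j : ℕ) + 2 = p + 1 then (-1 : ℂ) ^ (i : ℕ) else 0) else 0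
    | Sum.inr i, Sum.inl j =>
        if p = q then (if (j : ℕ) + (i : ℕ) + 2 = p + 1 then (-1 : ℂ) ^ (j : ℕ) else 0) else 0
    | Sum.inr i, Sum.inr j =>
        if p = q then 0 else if (i : ℕ) + (j : ℕ) + 2 = q + 1 then (-1 : ℂ) ^ (i : ℕ) else 0

/-- The symmetric bilinear form `β_λ` for `λ = (p, q)`. -/
def beta (p q : ℕ) : LinearMap.BilinForm ℂ (V p q) :=
  Matrix.toLinearMap₂' ℂ (gram p q)

/-- Orthogonal complement with respect to `β_λ`. -/
def orth (p q : ℕ) (W : Submodule ℂ (V p q)) : Submodule ℂ (V p q) :=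
  (beta p q).orthogonal W

/-- The subspace `⟨e_1, …, e_r, f_1, …, f_s⟩`. -/
def EF (p q r s : ℕ) : Submodule ℂ (V p q) :=
  Submodule.span ℂ
    ({v | ∃ i, 1 ≤ i ∧ i ≤ r ∧ v = ee p q i} ∪ {v | ∃ j, 1 ≤ j ∧ j ≤ s ∧ v = ff p q j})

/-- A complete isotropic flag in `(V_λ, β_λ)`, encoded as a function `ℕ → Submodule`
which is `⊤` from degree `p+q` on. -/
def IsFlag (p q : ℕ) (F : ℕ → Submodule ℂ (V p q)) : Prop :=
  (∀ i ≤ p + q, Module.finrank ℂ (F i) = i) ∧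
  (∀ i < p + q, F i ≤ F (i + 1)) ∧
  (∀ i ≤ p + q, F (p + q - i) = orth p q (F i)) ∧
  (∀ i, p + q ≤ i → F i = ⊤)

/-- The flag `F` lies in the Springer fiber of `x_λ`. -/
def InSpringer (p q : ℕ) (F : ℕ → Submodule ℂ (V p q)) : Prop :=
  ∀ i < p + q, (F (i + 1)).map (xmap p q) ≤ F i
/-- The coordinate projection `V_(p,q) → V_(p',q')`, sending `e_i ↦ e_i` (resp. `f_j ↦ f_j`)
when the index is in range and to `0` otherwise. -/
def Pmap (p q p' q' : ℕ) : V p q →ₗ[ℂ] V p' q' where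
  toFun v := Sum.elim
    (fun i => if h : (i : ℕ) < p then v (Sum.inl ⟨(i : ℕ), h⟩) else 0)
    (fun j => if h : (j : ℕ) < q then v (Sum.inr ⟨(j : ℕ), h⟩) else 0)
  map_add' u v := by
    funext s; cases s <;> dsimp <;> split <;> simp
  map_smul' c v := by
    funext s; cases s <;> dsimp <;> split <;> simp

/-- The flag in `V_(p',q')` induced, via a linear map `Q` defined on `W^⊥` and killing `W`
(representing an isomorphism `W^⊥/W ≅ V_(p',q')`), by the part `F_l ⊆ F_{l+1} ⊆ …` of a
flag `F` in `V_(p,q)`:  `F''_i = Q(F_{l+i}/W)` for `i ≤ (p'+q')/2`, and the remaining spaces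
are determined by taking orthogonal complements with respect to `β_(p',q')`. -/
def Qflag (p q p' q' l : ℕ) (W : Submodule ℂ (V p q)) (Q : V p q →ₗ[ℂ] V p' q')
    (F : ℕ → Submodule ℂ (V p q)) : ℕ → Submodule ℂ (V p' q') :=
  fun i =>
    if i ≤ (p' + q') / 2 then (F (l + i) ⊓ orth p q W).map Q
    else if i ≤ p' + q' then orth p' q' ((F (l + (p' + q' - i)) ⊓ orth p q W).map Q)
    else ⊤

/-- The flag in `V_(2t,2t)` obtained from a flag `F` in `V_(p,q)` by applying the projection
`Pmap` to `F_0, …, F_{2t}` and completing by orthogonal complements. -/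
def Pflag (p q t : ℕ) (F : ℕ → Submodule ℂ (V p q)) : ℕ → Submodule ℂ (V (2*t) (2*t)) :=
  fun i =>
    if i ≤ 2*t then (F i).map (Pmap p q (2*t) (2*t))
    else if i ≤ 4*t then orth (2*t) (2*t) ((F (4*t - i)).map (Pmap p q (2*t) (2*t)))
    else ⊤

/-- The conditions determining the quotient isomorphism `Q^I : W^⊥/W → V_ν` of
Lemma Q(a), encoded on an ambient linear map `Q : V_λ → V_ν` which kills `W`
(so that `Q` represents a linear map `W^⊥/W → V_ν` via its restriction to `W^⊥`). -/
def QCondI (p k t : ℕ) (Q : V p k →ₗ[ℂ] V (p - 2*t) (k - 2*t)) : Prop :=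
  (∀ i, 1 ≤ i → i ≤ p - 2*t →
    Q (ee p k (t + i)) = (if Odd t then Complex.I else 1) • ee (p - 2*t) (k - 2*t) i) ∧
  (∀ j, 1 ≤ j → j ≤ k - 2*t →
    Q (ff p k (t + j)) = (if Odd t then Complex.I else 1) • ff (p - 2*t) (k - 2*t) j) ∧
  (∀ u ∈ EF p k t t, Q u = 0)

/-- Coordinate description of `EF`. -/
def KK (p q r s : ℕ) : Submodule ℂ (V p q) where
  carrier := {v | (∀ i : Fin p, r ≤ (i : ℕ) → v (Sum.inl i) = 0) ∧
    (∀ j : Fin q, s ≤ (j : ℕ) → v (Sum.inr j) = 0)}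
  add_mem' := fun ha hb => ⟨fun i hi => by simp [Pi.add_apply, ha.1 i hi, hb.1 i hi],
    fun j hj => by simp [Pi.add_apply, ha.2 j hj, hb.2 j hj]⟩
  zero_mem' := ⟨fun _ _ => rfl, fun _ _ => rfl⟩
  smul_mem' := fun c a ha => ⟨fun i hi => by simp [Pi.smul_apply, ha.1 i hi],
    fun j hj => by simp [Pi.smul_apply, ha.2 j hj]⟩

lemma mem_KK {p q r s : ℕ} {v : V p q} : v ∈ KK p q r s ↔
    (∀ i : Fin p, r ≤ (i : ℕ) → v (Sum.inl i) = 0) ∧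
    (∀ j : Fin q, s ≤ (j : ℕ) → v (Sum.inr j) = 0) := Iff.rfl

lemma KK_mono {p q r s r' s' : ℕ} (h1 : r ≤ r') (h2 : s ≤ s') : KK p q r s ≤ KK p q r' s' :=
  fun _ hv => ⟨fun i hi => hv.1 i (h1.trans hi), fun j hj => hv.2 j (h2.trans hj)⟩

lemma ee_eq_single {p q i : ℕ} (h1 : 1 ≤ i) (h2 : i ≤ p) :
    ee p q i = Pi.single (Sum.inl (⟨i - 1, by omega⟩ : Fin p)) 1 := by
  funext s
  cases s with
  | inl a =>
    simp only [ee, Sum.elim_inl, Pi.single_apply]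
    by_cases h : (a : ℕ) + 1 = i
    · rw [if_pos h, if_pos (by simp only [Sum.inl.injEq, Sum.inr.injEq, Fin.ext_iff]; omega)]
    · rw [if_neg h, if_neg (by simp only [Sum.inl.injEq, Sum.inr.injEq, Fin.ext_iff]; omega)]
  | inr a => simp [ee, Pi.single_apply]

lemma ff_eq_single {p q i : ℕ} (h1 : 1 ≤ i) (h2 : i ≤ q) :
    ff p q i = Pi.single (Sum.inr (⟨i - 1, by omega⟩ : Fin q)) 1 := by
  funext s
  cases s with
  | inr a =>
    simp only [ff, Sum.elim_inr, Pi.single_apply]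
    by_cases h : (a : ℕ) + 1 = i
    · rw [if_pos h, if_pos (by simp only [Sum.inl.injEq, Sum.inr.injEq, Fin.ext_iff]; omega)]
    · rw [if_neg h, if_neg (by simp only [Sum.inl.injEq, Sum.inr.injEq, Fin.ext_iff]; omega)]
  | inl a => simp [ff, Pi.single_apply]

lemma ee_mem_KK {p q r s i : ℕ} (h : i ≤ r) : ee p q i ∈ KK p q r s :=
  ⟨fun j hj => by simp only [ee, Sum.elim_inl]; rw [if_neg (by omega)], fun _ _ => rfl⟩

lemma ff_mem_KK {p q r s i : ℕ} (h : i ≤ s) : ff p q i ∈ KK p q r s :=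
  ⟨fun _ _ => rfl, fun j hj => by simp only [ff, Sum.elim_inr]; rw [if_neg (by omega)]⟩

lemma EF_eq_KK (p q r s : ℕ) : EF p q r s = KK p q r s := by
  apply le_antisymm
  · rw [EF, Submodule.span_le]
    rintro v (⟨i, hi1, hi2, rfl⟩ | ⟨j, hj1, hj2, rfl⟩)
    · exact ee_mem_KK hi2
    · exact ff_mem_KK hj2
  · intro v hv
    rw [← Finset.univ_sum_single v]
    apply Submodule.sum_mem
    rintro (a | b) -
    · by_cases h : r ≤ (a : ℕ)
      · rw [hv.1 a h, Pi.single_zero]; exact Submodule.zero_mem _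
      · have : Pi.single (Sum.inl a) (v (Sum.inl a)) = v (Sum.inl a) • ee p q ((a : ℕ) + 1) := by
          rw [ee_eq_single (by omega) (by omega)]
          simp only [Nat.add_sub_cancel, Fin.eta]
          rw [← Pi.single_smul, smul_eq_mul, mul_one]
        rw [this]
        exact Submodule.smul_mem _ _ (Submodule.subset_span (Or.inl ⟨(a : ℕ) + 1, by omega, by omega, rfl⟩))
    · by_cases h : s ≤ (b : ℕ)
      · rw [hv.2 b h, Pi.single_zero]; exact Submodule.zero_mem _
      · have : Pi.single (Sum.inr b) (v (Sum.inr b)) = v (Sum.inr b) • ff p q ((b : ℕ) + 1) := by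
          rw [ff_eq_single (by omega) (by omega)]
          simp only [Nat.add_sub_cancel, Fin.eta]
          rw [← Pi.single_smul, smul_eq_mul, mul_one]
        rw [this]
        exact Submodule.smul_mem _ _ (Submodule.subset_span (Or.inr ⟨(b : ℕ) + 1, by omega, by omega, rfl⟩))
lemma beta_apply (p q : ℕ) (u v : V p q) :
    beta p q u v = ∑ s, ∑ s', u s * (v s' * gram p q s s') := by
  rw [beta, Matrix.toLinearMap₂'_apply]
  rfl

lemma beta_single_left (p q : ℕ) (s₀ : Fin p ⊕ Fin q) (v : V p q) :
    beta p q (Pi.single s₀ 1) v = ∑ s', gram p q s₀ s' * v s' := by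
  rw [beta_apply, Fintype.sum_eq_single s₀]
  · exact Finset.sum_congr rfl fun s' _ => by rw [Pi.single_eq_same]; ring
  · intro s hs
    apply Finset.sum_eq_zero
    intro s' _
    rw [Pi.single_eq_of_ne hs, zero_mul]

lemma beta_single_single (p q : ℕ) (s₀ s₁ : Fin p ⊕ Fin q) :
    beta p q (Pi.single s₀ 1) (Pi.single s₁ 1) = gram p q s₀ s₁ := by
  rw [beta_single_left, Fintype.sum_eq_single s₁]
  · rw [Pi.single_eq_same, mul_one]
  · intro s hs; rw [Pi.single_eq_of_ne hs, mul_zero]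
lemma gram_inl_inl (p q : ℕ) (i j : Fin p) : gram p q (Sum.inl i) (Sum.inl j) =
    if p = q then 0 else if (i : ℕ) + (j : ℕ) + 2 = p + 1 then (-1 : ℂ) ^ (i : ℕ) else 0 := rfl
lemma gram_inl_inr (p q : ℕ) (i : Fin p) (j : Fin q) : gram p q (Sum.inl i) (Sum.inr j) =
    if p = q then (if (i : ℕ) + (j : ℕ) + 2 = p + 1 then (-1 : ℂ) ^ (i : ℕ) else 0) else 0 := rfl
lemma gram_inr_inl (p q : ℕ) (i : Fin q) (j : Fin p) : gram p q (Sum.inr i) (Sum.inl j) =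
    if p = q then (if (j : ℕ) + (i : ℕ) + 2 = p + 1 then (-1 : ℂ) ^ (j : ℕ) else 0) else 0 := rfl
lemma gram_inr_inr (p q : ℕ) (i j : Fin q) : gram p q (Sum.inr i) (Sum.inr j) =
    if p = q then 0 else if (i : ℕ) + (j : ℕ) + 2 = q + 1 then (-1 : ℂ) ^ (i : ℕ) else 0 := rfl

lemma beta_ee_left_ne {p q i : ℕ} (hpq : p ≠ q) (h1 : 1 ≤ i) (h2 : i ≤ p) (v : V p q) :
    beta p q (ee p q i) v = (-1 : ℂ) ^ (i - 1) * v (Sum.inl ⟨p - i, by omega⟩) := by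
  rw [ee_eq_single h1 h2, beta_single_left,
    Fintype.sum_eq_single (Sum.inl (⟨p - i, by omega⟩ : Fin p))]
  · rw [gram_inl_inl, if_neg hpq, if_pos (by simp only [Fin.val_mk]; omega)]
  · rintro (b | b) hb
    · rw [gram_inl_inl, if_neg hpq, if_neg (by simp only [ne_eq, Sum.inl.injEq, Fin.ext_iff, Fin.val_mk] at hb ⊢; omega), zero_mul]
    · rw [gram_inl_inr, if_neg hpq, zero_mul]

lemma beta_ee_left_eq {p q i : ℕ} (hpq : p = q) (h1 : 1 ≤ i) (h2 : i ≤ p) (v : V p q) :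
    beta p q (ee p q i) v = (-1 : ℂ) ^ (i - 1) * v (Sum.inr ⟨p - i, by omega⟩) := by
  rw [ee_eq_single h1 h2, beta_single_left,
    Fintype.sum_eq_single (Sum.inr (⟨p - i, by omega⟩ : Fin q))]
  · rw [gram_inl_inr, if_pos hpq, if_pos (by simp only [Fin.val_mk]; omega)]
  · rintro (b | b) hb
    · rw [gram_inl_inl, if_pos hpq, zero_mul]
    · rw [gram_inl_inr, if_pos hpq, if_neg (by simp only [ne_eq, Sum.inr.injEq, Fin.ext_iff, Fin.val_mk] at hb ⊢; omega), zero_mul]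

lemma beta_ff_left_ne {p q i : ℕ} (hpq : p ≠ q) (h1 : 1 ≤ i) (h2 : i ≤ q) (v : V p q) :
    beta p q (ff p q i) v = (-1 : ℂ) ^ (i - 1) * v (Sum.inr ⟨q - i, by omega⟩) := by
  rw [ff_eq_single h1 h2, beta_single_left,
    Fintype.sum_eq_single (Sum.inr (⟨q - i, by omega⟩ : Fin q))]
  · rw [gram_inr_inr, if_neg hpq, if_pos (by simp only [Fin.val_mk]; omega)]
  · rintro (b | b) hb
    · rw [gram_inr_inl, if_neg hpq, zero_mul]
    · rw [gram_inr_inr, if_neg hpq, if_neg (by simp only [ne_eq, Sum.inr.injEq, Fin.ext_iff, Fin.val_mk] at hb ⊢; omega), zero_mul]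

lemma beta_ff_left_eq {p q i : ℕ} (hpq : p = q) (h1 : 1 ≤ i) (h2 : i ≤ q) (v : V p q) :
    beta p q (ff p q i) v = (-1 : ℂ) ^ (p - i) * v (Sum.inl ⟨p - i, by omega⟩) := by
  rw [ff_eq_single h1 h2, beta_single_left,
    Fintype.sum_eq_single (Sum.inl (⟨p - i, by omega⟩ : Fin p))]
  · rw [gram_inr_inl, if_pos hpq, if_pos (by simp only [Fin.val_mk]; omega)]
  · rintro (b | b) hb
    · rw [gram_inr_inl, if_pos hpq, if_neg (by simp only [ne_eq, Sum.inl.injEq, Fin.ext_iff, Fin.val_mk] at hb ⊢; omega), zero_mul]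
    · rw [gram_inr_inr, if_pos hpq, zero_mul]
lemma neg_one_pow_ne_zero_C {n : ℕ} : ((-1 : ℂ) ^ n) ≠ 0 := by
  apply pow_ne_zero; simp

lemma ee_mem_EF {p q r s i : ℕ} (h1 : 1 ≤ i) (h2 : i ≤ r) : ee p q i ∈ EF p q r s :=
  Submodule.subset_span (Or.inl ⟨i, h1, h2, rfl⟩)

lemma ff_mem_EF {p q r s i : ℕ} (h1 : 1 ≤ i) (h2 : i ≤ s) : ff p q i ∈ EF p q r s :=
  Submodule.subset_span (Or.inr ⟨i, h1, h2, rfl⟩)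

lemma orth_EF (p q t : ℕ) (htp : t ≤ p) (htq : t ≤ q) :
    orth p q (EF p q t t) = KK p q (p - t) (q - t) := by
  ext u
  constructor
  · intro hu
    rw [orth, LinearMap.BilinForm.mem_orthogonal_iff] at hu
    by_cases hpq : p = q
    · constructor
      · intro a ha
        have h : beta p q (ff p q (p - (a : ℕ))) u = 0 :=
          hu (ff p q (p - (a : ℕ))) (ff_mem_EF (by omega) (by omega))
        rw [beta_ff_left_eq hpq (by omega) (by omega)] at h
        have := mul_eq_zero.1 h
        rcases this with h' | h'
        · exact absurd h' neg_one_pow_ne_zero_C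
        · convert h' using 3; simp only [Fin.ext_iff, Fin.val_mk]; omega
      · intro b hb
        have h : beta p q (ee p q (p - (b : ℕ))) u = 0 :=
          hu (ee p q (p - (b : ℕ))) (ee_mem_EF (by omega) (by omega))
        rw [beta_ee_left_eq hpq (by omega) (by omega)] at h
        have := mul_eq_zero.1 h
        rcases this with h' | h'
        · exact absurd h' neg_one_pow_ne_zero_C
        · convert h' using 3; simp only [Fin.ext_iff, Fin.val_mk]; omega
    · constructor
      · intro a ha
        have h : beta p q (ee p q (p - (a : ℕ))) u = 0 :=
          hu (ee p q (p - (a : ℕ))) (ee_mem_EF (by omega) (by omega))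
        rw [beta_ee_left_ne hpq (by omega) (by omega)] at h
        rcases mul_eq_zero.1 h with h' | h'
        · exact absurd h' neg_one_pow_ne_zero_C
        · convert h' using 3; simp only [Fin.ext_iff, Fin.val_mk]; omega
      · intro b hb
        have h : beta p q (ff p q (q - (b : ℕ))) u = 0 :=
          hu (ff p q (q - (b : ℕ))) (ff_mem_EF (by omega) (by omega))
        rw [beta_ff_left_ne hpq (by omega) (by omega)] at h
        rcases mul_eq_zero.1 h with h' | h'
        · exact absurd h' neg_one_pow_ne_zero_C
        · convert h' using 3; simp only [Fin.ext_iff, Fin.val_mk]; omega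
  · intro hu
    rw [orth, LinearMap.BilinForm.mem_orthogonal_iff]
    intro n hn
    rw [EF] at hn
    induction hn using Submodule.span_induction with
    | mem x hx =>
      show beta p q x u = 0
      rcases hx with ⟨i, hi1, hi2, rfl⟩ | ⟨j, hj1, hj2, rfl⟩
      · by_cases hpq : p = q
        · rw [beta_ee_left_eq hpq hi1 (by omega), hu.2 _ (by simp only [Fin.val_mk]; omega), mul_zero]
        · rw [beta_ee_left_ne hpq hi1 (by omega), hu.1 _ (by simp only [Fin.val_mk]; omega), mul_zero]
      · by_cases hpq : p = q
        · rw [beta_ff_left_eq hpq hj1 (by omega), hu.1 _ (by simp only [Fin.val_mk]; omega), mul_zero]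
        · rw [beta_ff_left_ne hpq hj1 (by omega), hu.2 _ (by simp only [Fin.val_mk]; omega), mul_zero]
    | zero => show beta p q 0 u = 0; rw [map_zero, LinearMap.zero_apply]
    | add x y hx hy ihx ihy =>
      show beta p q (x + y) u = 0
      rw [map_add, LinearMap.add_apply, show beta p q x u = 0 from ihx,
        show beta p q y u = 0 from ihy, add_zero]
    | smul c x hx ihx =>
      show beta p q (c • x) u = 0
      rw [map_smul, LinearMap.smul_apply, show beta p q x u = 0 from ihx, smul_zero]
lemma xmap_mem_KK {p q r s : ℕ} {u : V p q} (hu : u ∈ KK p q r s) :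
    xmap p q u ∈ KK p q r s := by
  refine ⟨fun i hi => ?_, fun j hj => ?_⟩
  · show (if h : (i : ℕ) + 1 < p then u (Sum.inl ⟨(i : ℕ) + 1, h⟩) else 0) = 0
    split
    · exact hu.1 _ (by simp only [Fin.val_mk]; omega)
    · rfl
  · show (if h : (j : ℕ) + 1 < q then u (Sum.inr ⟨(j : ℕ) + 1, h⟩) else 0) = 0
    split
    · exact hu.2 _ (by simp only [Fin.val_mk]; omega)
    · rfl

/-- The shift map `e_{t+i} ↦ e_i`, `f_{t+j} ↦ f_j` (without the scalar `ι`). -/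
def Smap (p q t : ℕ) : V p q →ₗ[ℂ] V (p - 2*t) (q - 2*t) where
  toFun v := Sum.elim
    (fun i => if h : (i : ℕ) + t < p then v (Sum.inl ⟨(i : ℕ) + t, h⟩) else 0)
    (fun j => if h : (j : ℕ) + t < q then v (Sum.inr ⟨(j : ℕ) + t, h⟩) else 0)
  map_add' u v := by
    funext s; cases s <;> dsimp <;> split <;> simp
  map_smul' c v := by
    funext s; cases s <;> dsimp <;> split <;> simp

lemma Smap_ee (p q t i : ℕ) : Smap p q t (ee p q (t + i)) = ee (p - 2*t) (q - 2*t) i := by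
  funext s
  cases s with
  | inl b =>
    show (if h : (b : ℕ) + t < p then ee p q (t + i) (Sum.inl ⟨(b : ℕ) + t, h⟩) else 0) = _
    have hb : (b : ℕ) + t < p := by omega
    rw [dif_pos hb]
    show (if (b : ℕ) + t + 1 = t + i then (1 : ℂ) else 0) = (if (b : ℕ) + 1 = i then 1 else 0)
    by_cases h : (b : ℕ) + 1 = i
    · rw [if_pos (by omega), if_pos h]
    · rw [if_neg (by omega), if_neg h]
  | inr b =>
    show (if h : (b : ℕ) + t < q then ee p q (t + i) (Sum.inr ⟨(b : ℕ) + t, h⟩) else 0) = (0 : ℂ)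
    split <;> rfl

lemma Smap_ff (p q t i : ℕ) : Smap p q t (ff p q (t + i)) = ff (p - 2*t) (q - 2*t) i := by
  funext s
  cases s with
  | inr b =>
    show (if h : (b : ℕ) + t < q then ff p q (t + i) (Sum.inr ⟨(b : ℕ) + t, h⟩) else 0) = _
    have hb : (b : ℕ) + t < q := by omega
    rw [dif_pos hb]
    show (if (b : ℕ) + t + 1 = t + i then (1 : ℂ) else 0) = (if (b : ℕ) + 1 = i then 1 else 0)
    by_cases h : (b : ℕ) + 1 = i
    · rw [if_pos (by omega), if_pos h]
    · rw [if_neg (by omega), if_neg h]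
  | inl b =>
    show (if h : (b : ℕ) + t < p then ff p q (t + i) (Sum.inl ⟨(b : ℕ) + t, h⟩) else 0) = (0 : ℂ)
    split <;> rfl

lemma Smap_zero_of_KK {p q t : ℕ} {u : V p q} (hu : u ∈ KK p q t t) : Smap p q t u = 0 := by
  funext s
  cases s with
  | inl b =>
    show (if h : (b : ℕ) + t < p then u (Sum.inl ⟨(b : ℕ) + t, h⟩) else 0) = 0
    split
    · exact hu.1 _ (by simp only [Fin.val_mk]; omega)
    · rfl
  | inr b =>
    show (if h : (b : ℕ) + t < q then u (Sum.inr ⟨(b : ℕ) + t, h⟩) else 0) = 0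
    split
    · exact hu.2 _ (by simp only [Fin.val_mk]; omega)
    · rfl

/-- Any `Q` satisfying `QCondI` agrees with `ι • Smap` on `W^⊥`. -/
lemma Q_eq_iota_smul {p k t : ℕ} (htk : 2*t ≤ k) (hkp : k ≤ p)
    {Q : V p k →ₗ[ℂ] V (p - 2*t) (k - 2*t)} (hQ : QCondI p k t Q) :
    ∀ u ∈ EF p k (p - t) (k - t),
      Q u = (if Odd t then Complex.I else 1) • Smap p k t u := by
  intro u hu
  rw [EF] at hu
  induction hu using Submodule.span_induction with
  | mem x hx =>
    rcases hx with ⟨i, hi1, hi2, rfl⟩ | ⟨j, hj1, hj2, rfl⟩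
    · by_cases hit : i ≤ t
      · rw [hQ.2.2 _ (ee_mem_EF hi1 hit), Smap_zero_of_KK (ee_mem_KK hit), smul_zero]
      · have h := hQ.1 (i - t) (by omega) (by omega)
        rw [show t + (i - t) = i by omega] at h
        rw [h]
        congr 1
        rw [show i = t + (i - t) by omega, Smap_ee, Nat.add_sub_cancel_left]
    · by_cases hjt : j ≤ t
      · rw [hQ.2.2 _ (ff_mem_EF hj1 hjt), Smap_zero_of_KK (ff_mem_KK hjt), smul_zero]
      · have h := hQ.2.1 (j - t) (by omega) (by omega)
        rw [show t + (j - t) = j by omega] at h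
        rw [h]
        congr 1
        rw [show j = t + (j - t) by omega, Smap_ff, Nat.add_sub_cancel_left]
  | zero => rw [map_zero, map_zero, smul_zero]
  | add x y hx hy ihx ihy => rw [map_add, map_add, ihx, ihy, smul_add]
  | smul c x hx ihx => rw [map_smul, map_smul, ihx, smul_comm]
lemma beta_ee_ee {p q i j : ℕ} (h1 : 1 ≤ i) (h2 : i ≤ p) (h3 : 1 ≤ j) (h4 : j ≤ p) :
    beta p q (ee p q i) (ee p q j) =
      if p = q then 0 else if i + j = p + 1 then (-1 : ℂ) ^ (i - 1) else 0 := by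
  rw [ee_eq_single h1 h2, ee_eq_single h3 h4, beta_single_single, gram_inl_inl]
  simp only [Fin.val_mk]
  by_cases hpq : p = q
  · rw [if_pos hpq, if_pos hpq]
  · rw [if_neg hpq, if_neg hpq]
    by_cases hij : i + j = p + 1
    · rw [if_pos (by omega), if_pos hij]
    · rw [if_neg (by omega), if_neg hij]

lemma beta_ee_ff {p q i j : ℕ} (h1 : 1 ≤ i) (h2 : i ≤ p) (h3 : 1 ≤ j) (h4 : j ≤ q) :
    beta p q (ee p q i) (ff p q j) =
      if p = q then (if i + j = p + 1 then (-1 : ℂ) ^ (i - 1) else 0) else 0 := by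
  rw [ee_eq_single h1 h2, ff_eq_single h3 h4, beta_single_single, gram_inl_inr]
  simp only [Fin.val_mk]
  by_cases hpq : p = q
  · rw [if_pos hpq, if_pos hpq]
    by_cases hij : i + j = p + 1
    · rw [if_pos (by omega), if_pos hij]
    · rw [if_neg (by omega), if_neg hij]
  · rw [if_neg hpq, if_neg hpq]

lemma beta_ff_ee {p q i j : ℕ} (h1 : 1 ≤ i) (h2 : i ≤ q) (h3 : 1 ≤ j) (h4 : j ≤ p) :
    beta p q (ff p q i) (ee p q j) =
      if p = q then (if i + j = p + 1 then (-1 : ℂ) ^ (j - 1) else 0) else 0 := by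
  rw [ff_eq_single h1 h2, ee_eq_single h3 h4, beta_single_single, gram_inr_inl]
  simp only [Fin.val_mk]
  by_cases hpq : p = q
  · rw [if_pos hpq, if_pos hpq]
    by_cases hij : i + j = p + 1
    · rw [if_pos (by omega), if_pos hij]
    · rw [if_neg (by omega), if_neg hij]
  · rw [if_neg hpq, if_neg hpq]

lemma beta_ff_ff {p q i j : ℕ} (h1 : 1 ≤ i) (h2 : i ≤ q) (h3 : 1 ≤ j) (h4 : j ≤ q) :
    beta p q (ff p q i) (ff p q j) =
      if p = q then 0 else if i + j = q + 1 then (-1 : ℂ) ^ (i - 1) else 0 := by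
  rw [ff_eq_single h1 h2, ff_eq_single h3 h4, beta_single_single, gram_inr_inr]
  simp only [Fin.val_mk]
  by_cases hpq : p = q
  · rw [if_pos hpq, if_pos hpq]
  · rw [if_neg hpq, if_neg hpq]
    by_cases hij : i + j = q + 1
    · rw [if_pos (by omega), if_pos hij]
    · rw [if_neg (by omega), if_neg hij]

lemma sign_shift {t i : ℕ} (h : t < i) :
    ((-1 : ℂ)) ^ (i - t - 1) = (-1 : ℂ) ^ t * (-1 : ℂ) ^ (i - 1) := by
  rw [← pow_add, show t + (i - 1) = (i - t - 1) + 2 * t from by omega, pow_add, pow_mul,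
    neg_one_sq, one_pow, mul_one]

lemma Smap_ee' {p q t i : ℕ} (h : t < i) :
    Smap p q t (ee p q i) = ee (p - 2*t) (q - 2*t) (i - t) := by
  have := Smap_ee p q t (i - t)
  rwa [show t + (i - t) = i from by omega] at this

lemma Smap_ff' {p q t i : ℕ} (h : t < i) :
    Smap p q t (ff p q i) = ff (p - 2*t) (q - 2*t) (i - t) := by
  have := Smap_ff p q t (i - t)
  rwa [show t + (i - t) = i from by omega] at this
lemma beta_shift {p k t : ℕ} (ht1 : 1 ≤ t) (htk : 2*t ≤ k) (hkp : k ≤ p) (htp : 2*t < p) :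
    ∀ u ∈ EF p k (p - t) (k - t), ∀ v ∈ EF p k (p - t) (k - t),
      beta (p - 2*t) (k - 2*t) (Smap p k t u) (Smap p k t v) =
        (-1 : ℂ) ^ t * beta p k u v := by
  have hpq' : (p - 2*t = k - 2*t) ↔ (p = k) := by omega
  intro u hu v hv
  rw [EF] at hu hv
  induction hu, hv using Submodule.span_induction₂ with
  | mem_mem x y hx hy =>
    rcases hx with ⟨i, hi1, hi2, rfl⟩ | ⟨i, hi1, hi2, rfl⟩ <;>
      rcases hy with ⟨j, hj1, hj2, rfl⟩ | ⟨j, hj1, hj2, rfl⟩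
    · -- ee, ee
      rw [beta_ee_ee hi1 (by omega) hj1 (by omega)]
      by_cases hit : i ≤ t
      · rw [Smap_zero_of_KK (ee_mem_KK hit), map_zero, LinearMap.zero_apply]
        by_cases hpq : p = k
        · rw [if_pos hpq, mul_zero]
        · rw [if_neg hpq, if_neg (by omega), mul_zero]
      · by_cases hjt : j ≤ t
        · rw [Smap_zero_of_KK (ee_mem_KK hjt), map_zero]
          by_cases hpq : p = k
          · rw [if_pos hpq, mul_zero]
          · rw [if_neg hpq, if_neg (by omega), mul_zero]
        · rw [Smap_ee' (by omega), Smap_ee' (by omega),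
            beta_ee_ee (by omega) (by omega) (by omega) (by omega)]
          by_cases hpq : p = k
          · rw [if_pos (by omega), if_pos hpq, mul_zero]
          · rw [if_neg (by omega), if_neg hpq]
            by_cases hij : i + j = p + 1
            · rw [if_pos (by omega), if_pos hij, show i - t - 1 = i - t - 1 from rfl,
                sign_shift (by omega : t < i)]
            · rw [if_neg (by omega), if_neg hij, mul_zero]
    · -- ee, ff
      rw [beta_ee_ff hi1 (by omega) hj1 (by omega)]
      by_cases hit : i ≤ t
      · rw [Smap_zero_of_KK (ee_mem_KK hit), map_zero, LinearMap.zero_apply]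
        by_cases hpq : p = k
        · rw [if_pos hpq, if_neg (by omega), mul_zero]
        · rw [if_neg hpq, mul_zero]
      · by_cases hjt : j ≤ t
        · rw [Smap_zero_of_KK (ff_mem_KK hjt), map_zero]
          by_cases hpq : p = k
          · rw [if_pos hpq, if_neg (by omega), mul_zero]
          · rw [if_neg hpq, mul_zero]
        · rw [Smap_ee' (by omega), Smap_ff' (by omega),
            beta_ee_ff (by omega) (by omega) (by omega) (by omega)]
          by_cases hpq : p = k
          · rw [if_pos (by omega), if_pos hpq]
            by_cases hij : i + j = p + 1
            · rw [if_pos (by omega), if_pos hij, sign_shift (by omega : t < i)]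
            · rw [if_neg (by omega), if_neg hij, mul_zero]
          · rw [if_neg (by omega), if_neg hpq, mul_zero]
    · -- ff, ee
      rw [beta_ff_ee hi1 (by omega) hj1 (by omega)]
      by_cases hit : i ≤ t
      · rw [Smap_zero_of_KK (ff_mem_KK hit), map_zero, LinearMap.zero_apply]
        by_cases hpq : p = k
        · rw [if_pos hpq, if_neg (by omega), mul_zero]
        · rw [if_neg hpq, mul_zero]
      · by_cases hjt : j ≤ t
        · rw [Smap_zero_of_KK (ee_mem_KK hjt), map_zero]
          by_cases hpq : p = k
          · rw [if_pos hpq, if_neg (by omega), mul_zero]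
          · rw [if_neg hpq, mul_zero]
        · rw [Smap_ff' (by omega), Smap_ee' (by omega),
            beta_ff_ee (by omega) (by omega) (by omega) (by omega)]
          by_cases hpq : p = k
          · rw [if_pos (by omega), if_pos hpq]
            by_cases hij : i + j = p + 1
            · rw [if_pos (by omega), if_pos hij, sign_shift (by omega : t < j)]
            · rw [if_neg (by omega), if_neg hij, mul_zero]
          · rw [if_neg (by omega), if_neg hpq, mul_zero]
    · -- ff, ff
      rw [beta_ff_ff hi1 (by omega) hj1 (by omega)]
      by_cases hit : i ≤ t
      · rw [Smap_zero_of_KK (ff_mem_KK hit), map_zero, LinearMap.zero_apply]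
        by_cases hpq : p = k
        · rw [if_pos hpq, mul_zero]
        · rw [if_neg hpq, if_neg (by omega), mul_zero]
      · by_cases hjt : j ≤ t
        · rw [Smap_zero_of_KK (ff_mem_KK hjt), map_zero]
          by_cases hpq : p = k
          · rw [if_pos hpq, mul_zero]
          · rw [if_neg hpq, if_neg (by omega), mul_zero]
        · rw [Smap_ff' (by omega), Smap_ff' (by omega),
            beta_ff_ff (by omega) (by omega) (by omega) (by omega)]
          by_cases hpq : p = k
          · rw [if_pos (by omega), if_pos hpq, mul_zero]
          · rw [if_neg (by omega), if_neg hpq]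
            by_cases hij : i + j = k + 1
            · rw [if_pos (by omega), if_pos hij, sign_shift (by omega : t < i)]
            · rw [if_neg (by omega), if_neg hij, mul_zero]
  | zero_left y hy => simp
  | zero_right x hx => simp
  | add_left x y z hx hy hz ihx ihy =>
    simp only [map_add, LinearMap.add_apply, ihx, ihy]
    ring
  | add_right x y z hx hy hz ihx ihy =>
    simp only [map_add, LinearMap.add_apply, ihx, ihy]
    ring
  | smul_left c x y hx hy ihx =>
    simp only [map_smul, LinearMap.smul_apply, smul_eq_mul, ihx]
    ring
  | smul_right c x y hx hy ihx =>
    simp only [map_smul, LinearMap.smul_apply, smul_eq_mul, ihx]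
    ring
lemma Smap_xmap {p k t : ℕ} (ht1 : 1 ≤ t) (htk : 2*t ≤ k) (hkp : k ≤ p) {u : V p k}
    (hu : u ∈ KK p k (p - t) (k - t)) :
    Smap p k t (xmap p k u) = xmap (p - 2*t) (k - 2*t) (Smap p k t u) := by
  funext s
  cases s with
  | inl b =>
    have hb : (b : ℕ) + t < p := by omega
    show (if h : (b : ℕ) + t < p then (xmap p k u) (Sum.inl ⟨(b : ℕ) + t, h⟩) else 0) = _
    rw [dif_pos hb]
    show (if h : (b : ℕ) + t + 1 < p then u (Sum.inl ⟨(b : ℕ) + t + 1, h⟩) else 0) =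
      (if h : (b : ℕ) + 1 < p - 2*t then (Smap p k t u) (Sum.inl ⟨(b : ℕ) + 1, h⟩) else 0)
    by_cases h1 : (b : ℕ) + 1 < p - 2*t
    · rw [dif_pos h1]
      show _ = (if h : (b : ℕ) + 1 + t < p then u (Sum.inl ⟨(b : ℕ) + 1 + t, h⟩) else 0)
      rw [dif_pos (show (b : ℕ) + t + 1 < p by omega), dif_pos (show (b : ℕ) + 1 + t < p by omega)]
      exact congrArg u (congrArg Sum.inl (Fin.ext (by simp only [Fin.val_mk]; omega)))
    · rw [dif_neg h1]
      split
      · exact hu.1 _ (by simp only [Fin.val_mk]; omega)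
      · rfl
  | inr b =>
    have hb : (b : ℕ) + t < k := by omega
    show (if h : (b : ℕ) + t < k then (xmap p k u) (Sum.inr ⟨(b : ℕ) + t, h⟩) else 0) = _
    rw [dif_pos hb]
    show (if h : (b : ℕ) + t + 1 < k then u (Sum.inr ⟨(b : ℕ) + t + 1, h⟩) else 0) =
      (if h : (b : ℕ) + 1 < k - 2*t then (Smap p k t u) (Sum.inr ⟨(b : ℕ) + 1, h⟩) else 0)
    by_cases h1 : (b : ℕ) + 1 < k - 2*t
    · rw [dif_pos h1]
      show _ = (if h : (b : ℕ) + 1 + t < k then u (Sum.inr ⟨(b : ℕ) + 1 + t, h⟩) else 0)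
      rw [dif_pos (show (b : ℕ) + t + 1 < k by omega), dif_pos (show (b : ℕ) + 1 + t < k by omega)]
      exact congrArg u (congrArg Sum.inr (Fin.ext (by simp only [Fin.val_mk]; omega)))
    · rw [dif_neg h1]
      split
      · exact hu.2 _ (by simp only [Fin.val_mk]; omega)
      · rfl

/-- Right inverse of the shift map. -/
def Tfun (p k t : ℕ) (w : V (p - 2*t) (k - 2*t)) : V p k :=
  Sum.elim
    (fun a : Fin p => if h : t ≤ (a : ℕ) ∧ (a : ℕ) - t < p - 2*t then
      w (Sum.inl ⟨(a : ℕ) - t, h.2⟩) else 0)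
    (fun b : Fin k => if h : t ≤ (b : ℕ) ∧ (b : ℕ) - t < k - 2*t then
      w (Sum.inr ⟨(b : ℕ) - t, h.2⟩) else 0)

lemma Tfun_mem_KK (p k t : ℕ) (w : V (p - 2*t) (k - 2*t)) :
    Tfun p k t w ∈ KK p k (p - t) (k - t) := by
  constructor
  · intro a ha
    show dite _ _ _ = 0
    rw [dif_neg (by omega)]
  · intro b hb
    show dite _ _ _ = 0
    rw [dif_neg (by omega)]

lemma Smap_Tfun (p k t : ℕ) (htk : 2*t ≤ k) (hkp : k ≤ p) (w : V (p - 2*t) (k - 2*t)) :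
    Smap p k t (Tfun p k t w) = w := by
  funext s
  cases s with
  | inl b =>
    show (if h : (b : ℕ) + t < p then (Tfun p k t w) (Sum.inl ⟨(b : ℕ) + t, h⟩) else 0) = _
    rw [dif_pos (show (b : ℕ) + t < p by omega)]
    show dite _ _ _ = _
    rw [dif_pos (show t ≤ (b : ℕ) + t ∧ (b : ℕ) + t - t < p - 2*t by constructor <;> omega)]
    exact congrArg w (congrArg Sum.inl (Fin.ext (by simp only [Fin.val_mk]; omega)))
  | inr b =>
    show (if h : (b : ℕ) + t < k then (Tfun p k t w) (Sum.inr ⟨(b : ℕ) + t, h⟩) else 0) = _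
    rw [dif_pos (show (b : ℕ) + t < k by omega)]
    show dite _ _ _ = _
    rw [dif_pos (show t ≤ (b : ℕ) + t ∧ (b : ℕ) + t - t < k - 2*t by constructor <;> omega)]
    exact congrArg w (congrArg Sum.inr (Fin.ext (by simp only [Fin.val_mk]; omega)))
/-- Lemma 3.3(a).  For `λ = (n-k, k)`, `n = 2m`, `n-k ≥ k`, `1 ≤ t`,
`2t ≤ k`, `2t < m`, and `W = ⟨e_1, …, e_t, f_1, …, f_t⟩`:
(1) `W` is isotropic and `W^⊥ = ⟨e_1, …, e_{n-k-t}, f_1, …, f_{k-t}⟩`;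
(2) the map `Q : W^⊥/W → V_ν`, `ν = (n-k-2t, k-2t)`, determined by
`Q(e_{t+i} + W) = ι e_i`, `Q(f_{t+j} + W) = ι f_j` (with `ι = √-1` for odd `t`, `ι = 1`
for even `t`) exists and any such map is a linear isomorphism compatible with the
bilinear forms; (3) `W` and `W^⊥` are `x_λ`-invariant and `Q ∘ x̄_λ = x_ν ∘ Q`.
Here `p` plays the role of `n - k`. -/
theorem statement0 (p k m t : ℕ) (hn : p + k = 2 * m) (hk : k ≤ p)
    (ht1 : 1 ≤ t) (ht2 : 2 * t ≤ k) (ht3 : 2 * t < m) :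
    -- (1) W is isotropic and W^⊥ is as claimed
    EF p k t t ≤ orth p k (EF p k t t) ∧
    orth p k (EF p k t t) = EF p k (p - t) (k - t) ∧
    -- (3) x-invariance of W and W^⊥
    (EF p k t t).map (xmap p k) ≤ EF p k t t ∧
    (orth p k (EF p k t t)).map (xmap p k) ≤ orth p k (EF p k t t) ∧
    -- (2) existence of Q with the prescribed values
    (∃ Q : V p k →ₗ[ℂ] V (p - 2*t) (k - 2*t), QCondI p k t Q) ∧
    -- (2)+(3): any such Q is an isomorphism of quadratic spaces intertwining x̄_λ and x_ν
    (∀ Q : V p k →ₗ[ℂ] V (p - 2*t) (k - 2*t), QCondI p k t Q →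
      (∀ u ∈ orth p k (EF p k t t), Q u = 0 → u ∈ EF p k t t) ∧
      (∀ w : V (p - 2*t) (k - 2*t), ∃ u ∈ orth p k (EF p k t t), Q u = w) ∧
      (∀ u ∈ orth p k (EF p k t t), ∀ v ∈ orth p k (EF p k t t),
        beta (p - 2*t) (k - 2*t) (Q u) (Q v) = beta p k u v) ∧
      (∀ u ∈ orth p k (EF p k t t),
        Q (xmap p k u) = xmap (p - 2*t) (k - 2*t) (Q u))) := by
  
  have hpm : m ≤ p := by omega
  have htp : 2 * t < p := by omega
  have hEF : EF p k t t = KK p k t t := EF_eq_KK p k t t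
  have horth : orth p k (EF p k t t) = KK p k (p - t) (k - t) :=
    orth_EF p k t (by omega) (by omega)
  have hEF2 : EF p k (p - t) (k - t) = KK p k (p - t) (k - t) := EF_eq_KK p k (p - t) (k - t)
  set ι : ℂ := if Odd t then Complex.I else 1 with hιdef
  have hι : ι ≠ 0 := by
    rw [hιdef]; split
    · exact Complex.I_ne_zero
    · exact one_ne_zero
  have hι2 : ι * ι * (-1 : ℂ) ^ t = 1 := by
    rw [hιdef]
    by_cases h : Odd t
    · rw [if_pos h, Complex.I_mul_I, Odd.neg_one_pow h]
      ring
    · rw [if_neg h, Even.neg_one_pow (Nat.not_odd_iff_even.mp h)]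
      ring
  refine ⟨?_, ?_, ?_, ?_, ?_, ?_⟩
  · rw [horth, hEF]
    exact KK_mono (by omega) (by omega)
  · rw [horth, hEF2]
  · rw [hEF]
    rintro x hx
    rw [Submodule.mem_map] at hx
    obtain ⟨v, hv, rfl⟩ := hx
    exact xmap_mem_KK hv
  · rw [horth]
    rintro x hx
    rw [Submodule.mem_map] at hx
    obtain ⟨v, hv, rfl⟩ := hx
    exact xmap_mem_KK hv
  · refine ⟨ι • Smap p k t, ?_, ?_, ?_⟩
    · intro i _ _
      rw [LinearMap.smul_apply, Smap_ee]
    · intro j _ _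
      rw [LinearMap.smul_apply, Smap_ff]
    · intro u hu
      rw [hEF] at hu
      rw [LinearMap.smul_apply, Smap_zero_of_KK hu, smul_zero]
  · intro Q hQ
    have hQS : ∀ u ∈ KK p k (p - t) (k - t), Q u = ι • Smap p k t u := by
      intro u hu
      exact Q_eq_iota_smul ht2 hk hQ u (hEF2.symm ▸ hu)
    refine ⟨?_, ?_, ?_, ?_⟩
    · -- injectivity
      intro u hu h0
      rw [horth] at hu
      have hS : Smap p k t u = 0 := by
        have h := hQS u hu
        rw [h0] at h
        exact ((smul_eq_zero.mp h.symm).resolve_left hι)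
      rw [hEF]
      constructor
      · intro a ha
        by_cases hap : (a : ℕ) < p - t
        · have h2 : (if h : ((a : ℕ) - t) + t < p
              then u (Sum.inl ⟨(a : ℕ) - t + t, h⟩) else 0) = 0 :=
            congrFun hS (Sum.inl ⟨(a : ℕ) - t, by omega⟩)
          rw [dif_pos (by omega)] at h2
          calc u (Sum.inl a) = u (Sum.inl ⟨(a : ℕ) - t + t, by omega⟩) :=
                congrArg u (congrArg Sum.inl (Fin.ext (by simp only [Fin.val_mk]; omega)))
            _ = 0 := h2
        · exact hu.1 a (by omega)
      · intro b hb
        by_cases hbp : (b : ℕ) < k - t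
        · have h2 : (if h : ((b : ℕ) - t) + t < k
              then u (Sum.inr ⟨(b : ℕ) - t + t, h⟩) else 0) = 0 :=
            congrFun hS (Sum.inr ⟨(b : ℕ) - t, by omega⟩)
          rw [dif_pos (by omega)] at h2
          calc u (Sum.inr b) = u (Sum.inr ⟨(b : ℕ) - t + t, by omega⟩) :=
                congrArg u (congrArg Sum.inr (Fin.ext (by simp only [Fin.val_mk]; omega)))
            _ = 0 := h2
        · exact hu.2 b (by omega)
    · -- surjectivity
      intro w
      refine ⟨ι⁻¹ • Tfun p k t w, ?_, ?_⟩
      · rw [horth]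
        exact Submodule.smul_mem _ _ (Tfun_mem_KK p k t w)
      · rw [map_smul, hQS _ (Tfun_mem_KK p k t w), Smap_Tfun p k t ht2 hk w, smul_smul,
          inv_mul_cancel₀ hι, one_smul]
    · -- bilinear forms
      intro u hu v hv
      rw [horth] at hu hv
      rw [hQS u hu, hQS v hv]
      simp only [map_smul, LinearMap.smul_apply, smul_eq_mul]
      rw [beta_shift ht1 ht2 hk htp u (hEF2.symm ▸ hu) v (hEF2.symm ▸ hv)]
      rw [show ι * (ι * ((-1 : ℂ) ^ t * beta p k u v)) = (ι * ι * (-1 : ℂ) ^ t) * beta p k u v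
        from by ring, hι2, one_mul]
    · -- intertwining
      intro u hu
      rw [horth] at hu
      rw [hQS _ (xmap_mem_KK hu), hQS u hu, Smap_xmap ht1 ht2 hk hu, map_smul]
end
end

section
/- Let n = 2m with m ≥ 2, λ = (m, m), and W = ⟨e_1⟩ ⊆ V_λ. Then W is isotropic for β_λ, W^⊥ = ⟨e_1, …, e_m, f_1, …, f_{m−1}⟩, and x_λ(W) ⊆ W, x_λ(W^⊥) ⊆ W^⊥. Moreover, with ν = (m−1, m−1), the linear map Q : W^⊥/W → V_ν determined by Q(e_{j+1} + W) = −√−1·e_j and Q(f_j + W) = −√−1·f_j for 1 ≤ j ≤ m−1 is a linear isomorphism satisfying β̄_λ(u, v) = β_ν(Q u, Q v) for all u, v ∈ W^⊥/W, and Q ∘ x̄_λ = x_ν ∘ Q. -/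
open Complex Submodule

noncomputable section

/-- The conditions determining the quotient isomorphism `Q^III_1 : W^⊥/W → V_ν`
(`W = ⟨e_1⟩`, `λ = (m,m)`, `ν = (m-1,m-1)`): `Q(e_{j+1} + W) = -√-1·e_j` and
`Q(f_j + W) = -√-1·f_j` for `1 ≤ j ≤ m-1`, encoded on an ambient linear map killing `W`. -/
def QCondIII1 (m : ℕ) (Q : V m m →ₗ[ℂ] V (m-1) (m-1)) : Prop :=
  (∀ j, 1 ≤ j → j ≤ m - 1 → Q (ee m m (j+1)) = (-Complex.I) • ee (m-1) (m-1) j) ∧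
  (∀ j, 1 ≤ j → j ≤ m - 1 → Q (ff m m j) = (-Complex.I) • ff (m-1) (m-1) j) ∧
  (∀ u ∈ EF m m 1 0, Q u = 0)

/-!
In coordinates `β_λ(e_1, v)` is the `f_m`-coordinate of `v`, so `W^⊥` is the coordinate subspace
where that coordinate vanishes, and all subspaces involved are coordinate subspaces, visibly stable
under the shift `x_λ`. On `W^⊥` the map `Q` is forced by its values on the basis vectors, and it
identifies the Gram matrix of `β_λ` restricted to the coordinates other than `e_1, f_m` with that
of `β_ν`.
-/

lemma gram_self_inl_inr (n : ℕ) (i j : Fin n) :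
    gram n n (.inl i) (.inr j) = if j = i.rev then (-1 : ℂ) ^ (i : ℕ) else 0 := by
  have : (i : ℕ) + j + 2 = n + 1 ↔ j = i.rev := by rw [Fin.ext_iff, Fin.val_rev]; omega
  simp only [gram, if_true, this]

lemma gram_self_inr_inl (n : ℕ) (i j : Fin n) :
    gram n n (.inr i) (.inl j) = if i = j.rev then (-1 : ℂ) ^ (j : ℕ) else 0 := by
  have : (j : ℕ) + i + 2 = n + 1 ↔ i = j.rev := by rw [Fin.ext_iff, Fin.val_rev]; omega
  simp only [gram, if_true, this]

lemma beta_self_apply (n : ℕ) (u v : V n n) :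
    beta n n u v = ∑ i : Fin n,
      (-1 : ℂ) ^ (i : ℕ) * (u (.inl i) * v (.inr i.rev) + u (.inr i.rev) * v (.inl i)) := by
  simp only [beta, Matrix.toLinearMap₂'_apply, Fintype.sum_sum_type, gram_self_inl_inr,
    gram_self_inr_inl, smul_eq_mul]
  simp [gram, Finset.sum_comm (γ := Fin n), ← Finset.sum_add_distrib, mul_add, mul_assoc,
    mul_comm, mul_left_comm]

lemma mem_EF_iff {p q r s : ℕ} {v : V p q} :
    v ∈ EF p q r s ↔
      (∀ i : Fin p, r ≤ i → v (.inl i) = 0) ∧ (∀ j : Fin q, s ≤ j → v (.inr j) = 0) := by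
  constructor
  · intro hv
    induction hv using span_induction with
    | mem x hx =>
      rcases hx with ⟨i, -, hi, rfl⟩ | ⟨j, -, hj, rfl⟩
      · refine ⟨fun a ha => ?_, fun _ _ => rfl⟩
        simp [ee]; omega
      · refine ⟨fun _ _ => rfl, fun a ha => ?_⟩
        simp [ff]; omega
    | zero => simp
    | add x y _ _ hx hy => simp_all
    | smul a x _ hx => simp_all
  · rintro ⟨hl, hr⟩
    rw [pi_eq_sum_univ v, Fintype.sum_sum_type]
    refine add_mem (sum_mem fun i _ => ?_) (sum_mem fun j _ => ?_)
    · by_cases hi : r ≤ (i : ℕ)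
      · rw [hl i hi, zero_smul]; exact zero_mem _
      · have he : (fun t => if Sum.inl i = t then 1 else 0) = ee p q (i + 1) := by
          ext (t | t) <;> simp [ee, Fin.val_inj, eq_comm]
        rw [he]
        exact smul_mem _ _ (subset_span (Or.inl ⟨i + 1, by omega, by omega, rfl⟩))
    · by_cases hj : s ≤ (j : ℕ)
      · rw [hr j hj, zero_smul]; exact zero_mem _
      · have hf : (fun t => if Sum.inr j = t then 1 else 0) = ff p q (j + 1) := by
          ext (t | t) <;> simp [ff, Fin.val_inj, eq_comm]
        rw [hf]
        exact smul_mem _ _ (subset_span (Or.inr ⟨j + 1, by omega, by omega, rfl⟩))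

lemma xmap_apply_inl (p q : ℕ) (v : V p q) (i : Fin p) :
    xmap p q v (.inl i) = if h : (i : ℕ) + 1 < p then v (.inl ⟨i + 1, h⟩) else 0 := rfl

lemma xmap_apply_inr (p q : ℕ) (v : V p q) (j : Fin q) :
    xmap p q v (.inr j) = if h : (j : ℕ) + 1 < q then v (.inr ⟨j + 1, h⟩) else 0 := rfl

lemma map_xmap_EF_le (p q r s : ℕ) : (EF p q r s).map (xmap p q) ≤ EF p q r s := by
  rintro _ ⟨v, hv, rfl⟩
  obtain ⟨hl, hr⟩ := mem_EF_iff.mp hv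
  refine mem_EF_iff.mpr ⟨fun i hi => ?_, fun j hj => ?_⟩
  · rw [xmap_apply_inl]
    split_ifs
    exacts [hl _ (by simp only; omega), rfl]
  · rw [xmap_apply_inr]
    split_ifs
    exacts [hr _ (by simp only; omega), rfl]

lemma EF_one_zero (p q : ℕ) : EF p q 1 0 = span ℂ {ee p q 1} := by
  rw [EF]
  congr 1
  ext v
  constructor
  · rintro (⟨i, h1, h2, rfl⟩ | ⟨j, h1, h2, -⟩)
    · obtain rfl : i = 1 := by omega
      rfl
    · omega
  · rintro rfl
    exact Or.inl ⟨1, le_rfl, le_rfl, rfl⟩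

lemma beta_ee_one_left (k : ℕ) (v : V (k + 1) (k + 1)) :
    beta (k + 1) (k + 1) (ee (k + 1) (k + 1) 1) v = v (.inr (Fin.last k)) := by
  simp [beta_self_apply, ee]

lemma mem_orth_EF_one_zero_iff {k : ℕ} {v : V (k + 1) (k + 1)} :
    v ∈ orth (k + 1) (k + 1) (EF (k + 1) (k + 1) 1 0) ↔ v (.inr (Fin.last k)) = 0 := by
  rw [orth, EF_one_zero, LinearMap.BilinForm.orthogonal_span_singleton_eq_toLin_ker,
    LinearMap.mem_ker]
  change beta _ _ (ee _ _ 1) v = 0 ↔ _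
  rw [beta_ee_one_left]

lemma mem_EF_self_pred_iff {k : ℕ} {v : V (k + 1) (k + 1)} :
    v ∈ EF (k + 1) (k + 1) (k + 1) k ↔ v (.inr (Fin.last k)) = 0 := by
  rw [mem_EF_iff]
  refine ⟨fun h => h.2 _ le_rfl, fun h => ⟨fun i hi => by omega, fun j hj => ?_⟩⟩
  obtain rfl : j = Fin.last k := Fin.ext (by have := j.isLt; simp only [Fin.val_last]; omega)
  exact h

lemma QCondIII1.eqOn {m : ℕ} {Q Q' : V m m →ₗ[ℂ] V (m - 1) (m - 1)} (hQ : QCondIII1 m Q)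
    (hQ' : QCondIII1 m Q') : Set.EqOn Q Q' (EF m m m (m - 1)) := by
  refine LinearMap.eqOn_span' ?_
  rintro _ (⟨i, h1, h2, rfl⟩ | ⟨j, h1, h2, rfl⟩)
  · obtain rfl | ⟨j, rfl, hj⟩ : i = 1 ∨ ∃ j, i = j + 1 ∧ 1 ≤ j :=
      (eq_or_ne i 1).imp_right fun h => ⟨i - 1, by omega, by omega⟩
    · have he : ee m m 1 ∈ EF m m 1 0 := subset_span (Or.inl ⟨1, le_rfl, le_rfl, rfl⟩)
      rw [hQ.2.2 _ he, hQ'.2.2 _ he]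
    · rw [hQ.1 j hj (by omega), hQ'.1 j hj (by omega)]
  · rw [hQ.2.1 j h1 h2, hQ'.2.1 j h1 h2]

-- The paper's `Q^III_1`, defined on all of `V_λ` by reading off coordinates: it forgets the
-- coordinates of `e_1` and `f_m` and sends `e_{j+1} ↦ -√-1·e_j`, `f_j ↦ -√-1·f_j`.
def qIII (k : ℕ) : V (k + 1) (k + 1) →ₗ[ℂ] V k k :=
  -I • LinearMap.funLeft ℂ ℂ (Sum.map Fin.succ Fin.castSucc)

lemma qIII_apply_inl (k : ℕ) (v : V (k + 1) (k + 1)) (i : Fin k) :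
    qIII k v (.inl i) = -I * v (.inl i.succ) := rfl

lemma qIII_apply_inr (k : ℕ) (v : V (k + 1) (k + 1)) (j : Fin k) :
    qIII k v (.inr j) = -I * v (.inr j.castSucc) := rfl

lemma qIII_condIII1 (k : ℕ) : QCondIII1 (k + 1) (qIII k) := by
  refine ⟨fun j _ _ => ?_, fun j _ _ => ?_, fun u hu => ?_⟩
  · ext (a | a) <;> simp [qIII_apply_inl, qIII_apply_inr, ee]
  · ext (a | a) <;> simp [qIII_apply_inl, qIII_apply_inr, ff]
  · obtain ⟨hl, hr⟩ := mem_EF_iff.mp hu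
    ext (a | a)
    · simp [qIII_apply_inl, hl a.succ (by simp)]
    · simp [qIII_apply_inr, hr]

lemma mem_EF_one_zero_of_qIII_eq_zero {k : ℕ} {u : V (k + 1) (k + 1)}
    (hu : u (.inr (Fin.last k)) = 0) (h : qIII k u = 0) : u ∈ EF (k + 1) (k + 1) 1 0 := by
  have hl (i : Fin k) : u (.inl i.succ) = 0 := by
    simpa [qIII_apply_inl] using congrFun h (.inl i)
  have hr (j : Fin k) : u (.inr j.castSucc) = 0 := by
    simpa [qIII_apply_inr] using congrFun h (.inr j)
  refine mem_EF_iff.mpr ⟨fun i hi => ?_, fun j _ => ?_⟩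
  · obtain ⟨i, rfl⟩ := Fin.exists_succ_eq.mpr (Fin.pos_iff_ne_zero.mp hi)
    exact hl i
  · induction j using Fin.lastCases
    exacts [hu, hr _]

lemma exists_qIII_eq (k : ℕ) (w : V k k) :
    ∃ u : V (k + 1) (k + 1), u (.inr (Fin.last k)) = 0 ∧ qIII k u = w :=
  ⟨I • Sum.elim (Fin.cons 0 (w ∘ .inl)) (Fin.snoc (w ∘ .inr) 0), by simp,
    by ext (a | a) <;> simp [qIII_apply_inl, qIII_apply_inr, ← mul_assoc]⟩

lemma beta_qIII {k : ℕ} {u v : V (k + 1) (k + 1)} (hu : u (.inr (Fin.last k)) = 0)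
    (hv : v (.inr (Fin.last k)) = 0) :
    beta k k (qIII k u) (qIII k v) = beta (k + 1) (k + 1) u v := by
  rw [beta_self_apply, beta_self_apply, Fin.sum_univ_succ, Fin.rev_zero, hu, hv, mul_zero,
    zero_mul, add_zero, mul_zero, zero_add]
  refine Finset.sum_congr rfl fun i _ => ?_
  -- the index shift flips the sign `(-1)^i`, and `(-√-1)^2 = -1` flips it back
  simp only [qIII_apply_inl, qIII_apply_inr, Fin.rev_succ, Fin.val_succ, pow_succ]
  linear_combination (-1 : ℂ) ^ (i : ℕ) * (u (.inl i.succ) * v (.inr i.rev.castSucc)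
    + u (.inr i.rev.castSucc) * v (.inl i.succ)) * I_sq

lemma qIII_xmap {k : ℕ} {u : V (k + 1) (k + 1)} (hu : u (.inr (Fin.last k)) = 0) :
    qIII k (xmap _ _ u) = xmap k k (qIII k u) := by
  ext (i | j)
  · simp only [qIII_apply_inl, xmap_apply_inl, Fin.val_succ]
    split_ifs with h₁ h₂ h₂
    · rfl
    · omega
    · omega
    · exact mul_zero _
  · simp only [qIII_apply_inr, xmap_apply_inr, Fin.val_castSucc]
    split_ifs with h₁ h₂ h₂
    · rfl
    · have hlast : (⟨j + 1, h₁⟩ : Fin (k + 1)) = Fin.last k :=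
        Fin.ext (by simp only [Fin.val_last]; omega)
      rw [hlast, hu, mul_zero]
    · omega
    · omega

/-- Lemma 3.3(b), case `Q^III_1`.  For `λ = (m,m)`, `m ≥ 2`, `W = ⟨e_1⟩`:
`W` is isotropic, `W^⊥ = ⟨e_1, …, e_m, f_1, …, f_{m-1}⟩`, `W` and `W^⊥` are
`x_λ`-invariant, and the map `Q : W^⊥/W → V_(m-1,m-1)` determined by
`Q(e_{j+1}+W) = -√-1·e_j`, `Q(f_j+W) = -√-1·f_j` is an isomorphism of quadratic
spaces satisfying `Q ∘ x̄_λ = x_ν ∘ Q`. -/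
theorem statement1 (m : ℕ) (hm : 2 ≤ m) :
    EF m m 1 0 ≤ orth m m (EF m m 1 0) ∧
    orth m m (EF m m 1 0) = EF m m m (m-1) ∧
    (EF m m 1 0).map (xmap m m) ≤ EF m m 1 0 ∧
    (orth m m (EF m m 1 0)).map (xmap m m) ≤ orth m m (EF m m 1 0) ∧
    (∃ Q : V m m →ₗ[ℂ] V (m-1) (m-1), QCondIII1 m Q) ∧
    (∀ Q : V m m →ₗ[ℂ] V (m-1) (m-1), QCondIII1 m Q →
      (∀ u ∈ orth m m (EF m m 1 0), Q u = 0 → u ∈ EF m m 1 0) ∧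
      (∀ w : V (m-1) (m-1), ∃ u ∈ orth m m (EF m m 1 0), Q u = w) ∧
      (∀ u ∈ orth m m (EF m m 1 0), ∀ v ∈ orth m m (EF m m 1 0),
        beta (m-1) (m-1) (Q u) (Q v) = beta m m u v) ∧
      (∀ u ∈ orth m m (EF m m 1 0),
        Q (xmap m m u) = xmap (m-1) (m-1) (Q u))) := by
  obtain ⟨k, rfl⟩ : ∃ k, m = k + 1 := ⟨m - 1, by omega⟩
  have horth : orth (k + 1) (k + 1) (EF (k + 1) (k + 1) 1 0) = EF (k + 1) (k + 1) (k + 1) k := by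
    ext v
    rw [mem_orth_EF_one_zero_iff, mem_EF_self_pred_iff]
  have hxW : (orth (k + 1) (k + 1) (EF (k + 1) (k + 1) 1 0)).map (xmap (k + 1) (k + 1)) ≤
      orth (k + 1) (k + 1) (EF (k + 1) (k + 1) 1 0) := by
    rw [horth]
    exact map_xmap_EF_le _ _ _ _
  refine ⟨fun u hu => mem_orth_EF_one_zero_iff.mpr ((mem_EF_iff.mp hu).2 _ (Nat.zero_le _)),
    horth, map_xmap_EF_le _ _ 1 0, hxW, ⟨qIII k, qIII_condIII1 k⟩, fun Q hQ => ?_⟩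
  have hQ_eq (u) (hu : u ∈ orth (k + 1) (k + 1) (EF (k + 1) (k + 1) 1 0)) : Q u = qIII k u :=
    hQ.eqOn (qIII_condIII1 k) (horth ▸ hu)
  refine ⟨fun u hu h0 => ?_, fun w => ?_, fun u hu v hv => ?_, fun u hu => ?_⟩
  · exact mem_EF_one_zero_of_qIII_eq_zero (mem_orth_EF_one_zero_iff.mp hu) (hQ_eq u hu ▸ h0)
  · obtain ⟨u, hu, rfl⟩ := exists_qIII_eq k w
    have hu' := mem_orth_EF_one_zero_iff.mpr hu
    exact ⟨u, hu', hQ_eq u hu'⟩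
  · rw [hQ_eq u hu, hQ_eq v hv]
    exact beta_qIII (mem_orth_EF_one_zero_iff.mp hu) (mem_orth_EF_one_zero_iff.mp hv)
  · rw [hQ_eq _ (hxW (mem_map_of_mem hu)), hQ_eq u hu]
    exact qIII_xmap (mem_orth_EF_one_zero_iff.mp hu)
end
end

section
/- Let n = 2m with m ≥ 2 even, λ = (m, m), and let c, d ∈ ℂ with c ≠ 0. Let W = ⟨c·e_1 + d·f_1⟩ ⊆ V_λ. Then W is isotropic for β_λ, W^⊥ = ⟨e_1, …, e_{m−1}, f_1, …, f_{m−1}, c·e_m + d·f_m⟩, and x_λ(W) ⊆ W, x_λ(W^⊥) ⊆ W^⊥. Moreover, with ν = (m−1, m−1), the linear map Q : W^⊥/W → V_ν determined by Q((e_{j+1} + (d/c)·f_{j+1}) + W) = −√−1·e_j and Q(f_j + W) = −√−1·f_j for 1 ≤ j ≤ m−1 is a linear isomorphism satisfying β̄_λ(u, v) = β_ν(Q u, Q v) for all u, v ∈ W^⊥/W, and Q ∘ x̄_λ = x_ν ∘ Q. -/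
open Complex Submodule

noncomputable section

/-- The conditions determining the quotient isomorphism `Q^II_1 : W^⊥/W → V_ν`
(`W = ⟨c·e_1 + d·f_1⟩`, `c ≠ 0`, `λ = (m,m)`, `ν = (m-1,m-1)`):
`Q((e_{j+1} + (d/c)·f_{j+1}) + W) = -√-1·e_j` and `Q(f_j + W) = -√-1·f_j` for
`1 ≤ j ≤ m-1`, encoded on an ambient linear map killing `W`. -/
def QCondII1 (m : ℕ) (c d : ℂ) (Q : V m m →ₗ[ℂ] V (m-1) (m-1)) : Prop :=
  (∀ j, 1 ≤ j → j ≤ m - 1 →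
    Q (ee m m (j+1) + (d/c) • ff m m (j+1)) = (-Complex.I) • ee (m-1) (m-1) j) ∧
  (∀ j, 1 ≤ j → j ≤ m - 1 → Q (ff m m j) = (-Complex.I) • ff (m-1) (m-1) j) ∧
  (∀ u ∈ Submodule.span ℂ {c • ee m m 1 + d • ff m m 1}, Q u = 0)

-- ===== auxiliary material =====

def elc {p q : ℕ} (u : V p q) (t : ℕ) : ℂ := if h : t < p then u (Sum.inl ⟨t, h⟩) else 0

def frc {p q : ℕ} (u : V p q) (t : ℕ) : ℂ := if h : t < q then u (Sum.inr ⟨t, h⟩) else 0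

lemma elc_fin {p q : ℕ} (u : V p q) (i : Fin p) : u (Sum.inl i) = elc u (i : ℕ) := by
  simp [elc]

lemma frc_fin {p q : ℕ} (u : V p q) (i : Fin q) : u (Sum.inr i) = frc u (i : ℕ) := by
  simp [frc]

lemma beta_sq (n : ℕ) (u v : V (n+1) (n+1)) :
    beta (n+1) (n+1) u v =
      ∑ i ∈ Finset.range (n+1),
        ((-1)^i * elc u i * frc v (n-i) + (-1)^(n-i) * frc u i * elc v (n-i)) := by
  rw [beta, Matrix.toLinearMap₂'_apply]
  rw [Fintype.sum_sum_type]
  have cl : ∀ i : Fin (n+1), (∑ t : Fin (n+1) ⊕ Fin (n+1),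
      u (Sum.inl i) • v t • gram (n+1) (n+1) (Sum.inl i) t)
      = (-1)^(i:ℕ) * elc u (i:ℕ) * frc v (n-(i:ℕ)) := by
    intro i
    rw [Fintype.sum_sum_type]
    have h1 : ∀ j : Fin (n+1), u (Sum.inl i) • v (Sum.inl j) • gram (n+1) (n+1) (Sum.inl i) (Sum.inl j) = 0 := by
      intro j; simp [gram]
    have h2 : ∑ j : Fin (n+1), u (Sum.inl i) • v (Sum.inr j) • gram (n+1) (n+1) (Sum.inl i) (Sum.inr j)
        = (-1)^(i:ℕ) * elc u (i:ℕ) * frc v (n-(i:ℕ)) := by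
      have hlt : n - (i:ℕ) < n + 1 := by omega
      rw [Finset.sum_eq_single (⟨n - (i:ℕ), hlt⟩ : Fin (n+1))]
      · have hcond : (i:ℕ) + (n - (i:ℕ)) + 2 = (n+1) + 1 := by have := i.isLt; omega
        simp [gram, hcond, elc, frc, smul_eq_mul]
        rw [if_pos (by omega : (i:ℕ) ≤ n)]
        ring
      · intro b _ hb
        have hcond : ¬ ((i:ℕ) + (b:ℕ) + 2 = (n+1) + 1) := by
          intro h
          apply hb; apply Fin.ext; simp; omega
        simp [gram, hcond]
        intro h; exact absurd (by omega : (i:ℕ) + (b:ℕ) + 2 = (n+1) + 1) hcond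
      · intro h; exact absurd (Finset.mem_univ _) h
    simp only [Finset.sum_const_zero, h1]
    rw [h2, zero_add]
  have cr : ∀ i : Fin (n+1), (∑ t : Fin (n+1) ⊕ Fin (n+1),
      u (Sum.inr i) • v t • gram (n+1) (n+1) (Sum.inr i) t)
      = (-1)^(n-(i:ℕ)) * frc u (i:ℕ) * elc v (n-(i:ℕ)) := by
    intro i
    rw [Fintype.sum_sum_type]
    have h1 : ∀ j : Fin (n+1), u (Sum.inr i) • v (Sum.inr j) • gram (n+1) (n+1) (Sum.inr i) (Sum.inr j) = 0 := by
      intro j; simp [gram]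
    have h2 : ∑ j : Fin (n+1), u (Sum.inr i) • v (Sum.inl j) • gram (n+1) (n+1) (Sum.inr i) (Sum.inl j)
        = (-1)^(n-(i:ℕ)) * frc u (i:ℕ) * elc v (n-(i:ℕ)) := by
      have hlt : n - (i:ℕ) < n + 1 := by omega
      rw [Finset.sum_eq_single (⟨n - (i:ℕ), hlt⟩ : Fin (n+1))]
      · have hcond : (n - (i:ℕ)) + (i:ℕ) + 2 = (n+1) + 1 := by have := i.isLt; omega
        simp [gram, hcond, elc, frc, smul_eq_mul]
        rw [if_pos (by omega : (i:ℕ) ≤ n)]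
        ring
      · intro b _ hb
        have hcond : ¬ ((b:ℕ) + (i:ℕ) + 2 = (n+1) + 1) := by
          intro h
          apply hb; apply Fin.ext; simp; omega
        simp [gram, hcond]
        intro h; exact absurd (by omega : (b:ℕ) + (i:ℕ) + 2 = (n+1) + 1) hcond
      · intro h; exact absurd (Finset.mem_univ _) h
    simp only [Finset.sum_const_zero, h1]
    rw [h2, add_zero]
  rw [Finset.sum_congr rfl (fun i _ => cl i), Finset.sum_congr rfl (fun i _ => cr i)]
  rw [← Finset.sum_add_distrib]
  rw [← Fin.sum_univ_eq_sum_range (fun i => ((-1:ℂ))^i * elc u i * frc v (n-i) + (-1)^(n-i) * frc u i * elc v (n-i)) (n+1)]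

theorem statement3' : True := trivial
lemma elc_add {p q : ℕ} (u v : V p q) (t : ℕ) : elc (u + v) t = elc u t + elc v t := by
  unfold elc; split <;> simp

lemma frc_add {p q : ℕ} (u v : V p q) (t : ℕ) : frc (u + v) t = frc u t + frc v t := by
  unfold frc; split <;> simp

lemma elc_smul {p q : ℕ} (a : ℂ) (u : V p q) (t : ℕ) : elc (a • u) t = a * elc u t := by
  unfold elc; split <;> simp

lemma frc_smul {p q : ℕ} (a : ℂ) (u : V p q) (t : ℕ) : frc (a • u) t = a * frc u t := by
  unfold frc; split <;> simp

lemma elc_ee {p q : ℕ} (i t : ℕ) (ht : t < p) : elc (ee p q i) t = if t + 1 = i then 1 else 0 := by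
  simp [elc, ee, ht]

lemma frc_ff {p q : ℕ} (i t : ℕ) (ht : t < q) : frc (ff p q i) t = if t + 1 = i then 1 else 0 := by
  simp [frc, ff, ht]

lemma elc_ff {p q : ℕ} (i t : ℕ) : elc (ff p q i) t = 0 := by
  unfold elc; split <;> simp [ff]

lemma frc_ee {p q : ℕ} (i t : ℕ) : frc (ee p q i) t = 0 := by
  unfold frc; split <;> simp [ee]

lemma beta_w_right (n : ℕ) (hn : Odd n) (c d : ℂ) (v : V (n+1) (n+1)) :
    beta (n+1) (n+1) v (c • ee (n+1) (n+1) 1 + d • ff (n+1) (n+1) 1)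
      = c * frc v n - d * elc v n := by
  rw [beta_sq]
  rw [Finset.sum_eq_single_of_mem n (Finset.self_mem_range_succ n)]
  · rw [Nat.sub_self]
    rw [frc_add, elc_add, frc_smul, frc_smul, elc_smul, elc_smul,
      elc_ee 1 0 (by omega), frc_ff 1 0 (by omega), elc_ff, frc_ee, hn.neg_one_pow]
    simp; ring
  · intro b hb hbn
    have hblt : b < n := by have := Finset.mem_range.1 hb; omega
    have hne : n - b + 1 ≠ 1 := by omega
    rw [frc_add, elc_add, frc_smul, frc_smul, elc_smul, elc_smul,
      elc_ee 1 (n-b) (by omega), frc_ff 1 (n-b) (by omega), elc_ff, frc_ee, if_neg hne]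
    ring

lemma beta_w_left (n : ℕ) (hn : Odd n) (c d : ℂ) (v : V (n+1) (n+1)) :
    beta (n+1) (n+1) (c • ee (n+1) (n+1) 1 + d • ff (n+1) (n+1) 1) v
      = c * frc v n - d * elc v n := by
  rw [beta_sq]
  rw [Finset.sum_eq_single_of_mem 0 (by simp)]
  · rw [Nat.sub_zero]
    rw [frc_add, elc_add, frc_smul, frc_smul, elc_smul, elc_smul,
      elc_ee 1 0 (by omega), frc_ff 1 0 (by omega), elc_ff, frc_ee, hn.neg_one_pow]
    simp; ring
  · intro b hb hbn
    have hblt : b < n + 1 := Finset.mem_range.1 hb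
    have hne : b + 1 ≠ 1 := by omega
    rw [frc_add, elc_add, frc_smul, frc_smul, elc_smul, elc_smul,
      elc_ee 1 b (by omega), frc_ff 1 b (by omega), elc_ff, frc_ee, if_neg hne]
    ring

lemma mem_orth_w (n : ℕ) (hn : Odd n) (c d : ℂ) (v : V (n+1) (n+1)) :
    v ∈ orth (n+1) (n+1)
      (Submodule.span ℂ {c • ee (n+1) (n+1) 1 + d • ff (n+1) (n+1) 1}) ↔
    c * frc v n = d * elc v n := by
  constructor
  · intro h
    have := h _ (Submodule.mem_span_singleton_self _)
    rw [beta_w_left n hn c d v] at this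
    exact sub_eq_zero.1 this
  · intro h u hu
    obtain ⟨t, rfl⟩ := Submodule.mem_span_singleton.1 hu
    rw [map_smul, LinearMap.smul_apply,
      beta_w_left n hn c d v, smul_eq_mul, sub_eq_zero.2 h, mul_zero]
lemma elc_sub {p q : ℕ} (u v : V p q) (t : ℕ) : elc (u - v) t = elc u t - elc v t := by
  unfold elc; split <;> simp

lemma frc_sub {p q : ℕ} (u v : V p q) (t : ℕ) : frc (u - v) t = frc u t - frc v t := by
  unfold frc; split <;> simp

lemma sum_pick (N : ℕ) (g : ℕ → ℂ) (t : ℕ) :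
    ∑ j ∈ Finset.range N, g j * (if t = j then 1 else 0) = if t < N then g t else 0 := by
  split
  · rw [Finset.sum_eq_single_of_mem t (Finset.mem_range.2 ‹_›)]
    · simp
    · intro b _ hb; simp [(Ne.symm hb : ¬ t = b)]
  · apply Finset.sum_eq_zero; intro b hb
    have : t ≠ b := by have := Finset.mem_range.1 hb; omega
    simp [this]

lemma decomp (p q : ℕ) (v : V p q) :
    v = (∑ j ∈ Finset.range p, elc v j • ee p q (j+1)) +
        ∑ j ∈ Finset.range q, frc v j • ff p q (j+1) := by
  funext s
  rw [Pi.add_apply, Finset.sum_apply, Finset.sum_apply]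
  cases s with
  | inl i =>
    have h2 : ∀ j ∈ Finset.range q, (frc v j • ff p q (j+1)) (Sum.inl i) = 0 := by
      intro j _; simp [ff]
    have h1 : ∀ j ∈ Finset.range p, (elc v j • ee p q (j+1)) (Sum.inl i)
        = elc v j * (if (i:ℕ) = j then 1 else 0) := by
      intro j _; simp [ee, smul_eq_mul]
    rw [Finset.sum_congr rfl h2, Finset.sum_const_zero, add_zero,
      Finset.sum_congr rfl h1, sum_pick p (elc v) (i:ℕ), if_pos i.isLt]
    exact elc_fin v i
  | inr i =>
    have h2 : ∀ j ∈ Finset.range p, (elc v j • ee p q (j+1)) (Sum.inr i) = 0 := by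
      intro j _; simp [ee]
    have h1 : ∀ j ∈ Finset.range q, (frc v j • ff p q (j+1)) (Sum.inr i)
        = frc v j * (if (i:ℕ) = j then 1 else 0) := by
      intro j _; simp [ff, smul_eq_mul]
    rw [Finset.sum_congr rfl h2, Finset.sum_const_zero, zero_add,
      Finset.sum_congr rfl h1, sum_pick q (frc v) (i:ℕ), if_pos i.isLt]
    exact frc_fin v i

lemma mem_EF (n : ℕ) (v : V (n+1) (n+1)) (h1 : elc v n = 0) (h2 : frc v n = 0) :
    v ∈ EF (n+1) (n+1) n n := by
  have hd := decomp (n+1) (n+1) v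
  rw [Finset.sum_range_succ, Finset.sum_range_succ, h1, h2, zero_smul, zero_smul,
    add_zero, add_zero] at hd
  rw [hd]
  apply add_mem
  · apply sum_mem; intro j hj
    apply smul_mem; apply Submodule.subset_span
    exact Or.inl ⟨j+1, by omega, by have := Finset.mem_range.1 hj; omega, rfl⟩
  · apply sum_mem; intro j hj
    apply smul_mem; apply Submodule.subset_span
    exact Or.inr ⟨j+1, by omega, by have := Finset.mem_range.1 hj; omega, rfl⟩
lemma part1 (n : ℕ) (hn : Odd n) (c d : ℂ) :
    Submodule.span ℂ {c • ee (n+1) (n+1) 1 + d • ff (n+1) (n+1) 1} ≤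
      orth (n+1) (n+1) (Submodule.span ℂ {c • ee (n+1) (n+1) 1 + d • ff (n+1) (n+1) 1}) := by
  rw [Submodule.span_le, Set.singleton_subset_iff, SetLike.mem_coe, mem_orth_w n hn c d]
  have h1 : 1 ≤ n := hn.pos
  rw [elc_add, frc_add, elc_smul, frc_smul, elc_smul, frc_smul,
    elc_ee 1 n (by omega), frc_ff 1 n (by omega), elc_ff, frc_ee,
    if_neg (by omega : ¬ n + 1 = 1)]
  ring

lemma part3 (n : ℕ) (c d : ℂ) :
    (Submodule.span ℂ {c • ee (n+1) (n+1) 1 + d • ff (n+1) (n+1) 1}).map (xmap (n+1) (n+1)) ≤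
      Submodule.span ℂ {c • ee (n+1) (n+1) 1 + d • ff (n+1) (n+1) 1} := by
  rw [Submodule.map_span_le]
  intro v hv
  rw [Set.mem_singleton_iff] at hv
  subst hv
  have h0 : xmap (n+1) (n+1) (c • ee (n+1) (n+1) 1 + d • ff (n+1) (n+1) 1) = 0 := by
    funext s
    cases s <;>
      (simp only [xmap, LinearMap.coe_mk, AddHom.coe_mk, Sum.elim_inl, Sum.elim_inr,
        Pi.zero_apply]
       split <;> simp [ee, ff])
  rw [h0]; exact zero_mem _

lemma part4 (n : ℕ) (hn : Odd n) (c d : ℂ) :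
    (orth (n+1) (n+1) (Submodule.span ℂ {c • ee (n+1) (n+1) 1 + d • ff (n+1) (n+1) 1})).map
        (xmap (n+1) (n+1)) ≤
      orth (n+1) (n+1) (Submodule.span ℂ {c • ee (n+1) (n+1) 1 + d • ff (n+1) (n+1) 1}) := by
  rw [Submodule.map_le_iff_le_comap]
  intro v hv
  rw [Submodule.mem_comap, mem_orth_w n hn c d]
  have he : elc (xmap (n+1) (n+1) v) n = 0 := by
    simp only [elc, xmap, LinearMap.coe_mk, AddHom.coe_mk, Sum.elim_inl]
    split
    · rw [dif_neg (by omega)]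
    · rfl
  have hf : frc (xmap (n+1) (n+1) v) n = 0 := by
    simp only [frc, xmap, LinearMap.coe_mk, AddHom.coe_mk, Sum.elim_inr]
    split
    · rw [dif_neg (by omega)]
    · rfl
  rw [he, hf, mul_zero, mul_zero]

lemma part2 (n : ℕ) (hn : Odd n) (c d : ℂ) (hc : c ≠ 0) :
    orth (n+1) (n+1) (Submodule.span ℂ {c • ee (n+1) (n+1) 1 + d • ff (n+1) (n+1) 1}) =
      EF (n+1) (n+1) n n ⊔
        Submodule.span ℂ {c • ee (n+1) (n+1) (n+1) + d • ff (n+1) (n+1) (n+1)} := by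
  apply le_antisymm
  · intro v hv
    rw [mem_orth_w n hn c d] at hv
    have hsplit : v = (v - (elc v n / c) • (c • ee (n+1) (n+1) (n+1) + d • ff (n+1) (n+1) (n+1)))
        + (elc v n / c) • (c • ee (n+1) (n+1) (n+1) + d • ff (n+1) (n+1) (n+1)) := by
      abel
    rw [hsplit]
    apply add_mem
    · apply Submodule.mem_sup_left
      apply mem_EF
      · rw [elc_sub, elc_smul, elc_add, elc_smul, elc_smul, elc_ee (n+1) n (by omega),
          elc_ff, if_pos rfl]
        field_simp
        ring
      · rw [frc_sub, frc_smul, frc_add, frc_smul, frc_smul, frc_ff (n+1) n (by omega),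
          frc_ee, if_pos rfl]
        field_simp
        linear_combination hv
    · exact Submodule.mem_sup_right (Submodule.smul_mem _ _ (Submodule.subset_span rfl))
  · apply sup_le
    · rw [EF, Submodule.span_le]
      rintro v (⟨i, hi1, hi2, rfl⟩ | ⟨i, hi1, hi2, rfl⟩) <;>
        rw [SetLike.mem_coe, mem_orth_w n hn c d]
      · rw [elc_ee i n (by omega), frc_ee, if_neg (by omega)]
        ring
      · rw [frc_ff i n (by omega), elc_ff, if_neg (by omega)]
        ring
    · rw [Submodule.span_le, Set.singleton_subset_iff, SetLike.mem_coe, mem_orth_w n hn c d]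
      rw [elc_add, frc_add, elc_smul, frc_smul, elc_smul, frc_smul,
        elc_ee (n+1) n (by omega), frc_ff (n+1) n (by omega), elc_ff, frc_ee,
        if_pos (rfl : n + 1 = n + 1)]
      ring
def Q0 (k : ℕ) (c d : ℂ) : V (k+2) (k+2) →ₗ[ℂ] V (k+1) (k+1) where
  toFun v := Sum.elim
    (fun j : Fin (k+1) => -Complex.I * v (Sum.inl ⟨(j:ℕ)+1, by omega⟩))
    (fun j : Fin (k+1) => -Complex.I * v (Sum.inr ⟨(j:ℕ), by omega⟩)
        + (d/c) * Complex.I * v (Sum.inl ⟨(j:ℕ), by omega⟩))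
  map_add' u v := by
    funext s; cases s <;> simp <;> ring
  map_smul' a v := by
    funext s; cases s <;> simp <;> ring

lemma Q0_inl (k : ℕ) (c d : ℂ) (v : V (k+2) (k+2)) (t : Fin (k+1)) :
    Q0 k c d v (Sum.inl t) = -Complex.I * v (Sum.inl ⟨(t:ℕ)+1, by omega⟩) := rfl

lemma Q0_inr (k : ℕ) (c d : ℂ) (v : V (k+2) (k+2)) (t : Fin (k+1)) :
    Q0 k c d v (Sum.inr t) = -Complex.I * v (Sum.inr ⟨(t:ℕ), by omega⟩)
        + (d/c) * Complex.I * v (Sum.inl ⟨(t:ℕ), by omega⟩) := rfl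

lemma Q0cond1 (k : ℕ) (c d : ℂ) :
    ∀ j, 1 ≤ j → j ≤ k + 1 →
      Q0 k c d (ee (k+2) (k+2) (j+1) + (d/c) • ff (k+2) (k+2) (j+1))
        = (-Complex.I) • ee (k+1) (k+1) j := by
  intro j hj1 hj2
  (
    funext s
    cases s with
    | inl t =>
      rw [show ((-Complex.I) • ee (k+1) (k+1) j) (Sum.inl t)
          = -Complex.I * (if (t:ℕ) + 1 = j then 1 else 0) from rfl]
      rw [Q0_inl, Pi.add_apply, Pi.smul_apply, smul_eq_mul]
      rw [show (ee (k+2) (k+2) (j+1)) (Sum.inl ⟨(t:ℕ)+1, by omega⟩)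
          = (if (t:ℕ) + 1 + 1 = j + 1 then 1 else 0) from rfl]
      rw [show (ff (k+2) (k+2) (j+1)) (Sum.inl ⟨(t:ℕ)+1, by omega⟩) = 0 from rfl]
      rw [if_congr (by omega : ((t:ℕ)+1+1 = j+1) ↔ ((t:ℕ)+1 = j)) rfl rfl]
      ring
    | inr t =>
      rw [show ((-Complex.I) • ee (k+1) (k+1) j) (Sum.inr t) = -Complex.I * 0 from rfl]
      rw [Q0_inr, Pi.add_apply, Pi.add_apply, Pi.smul_apply, Pi.smul_apply, smul_eq_mul,
        smul_eq_mul]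
      rw [show (ee (k+2) (k+2) (j+1)) (Sum.inr ⟨(t:ℕ), by omega⟩) = 0 from rfl]
      rw [show (ff (k+2) (k+2) (j+1)) (Sum.inr ⟨(t:ℕ), by omega⟩)
          = (if (t:ℕ) + 1 = j + 1 then 1 else 0) from rfl]
      rw [show (ee (k+2) (k+2) (j+1)) (Sum.inl ⟨(t:ℕ), by omega⟩)
          = (if (t:ℕ) + 1 = j + 1 then 1 else 0) from rfl]
      rw [show (ff (k+2) (k+2) (j+1)) (Sum.inl ⟨(t:ℕ), by omega⟩) = 0 from rfl]
      by_cases ht : (t:ℕ) + 1 = j + 1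
      · rw [if_pos ht]; ring
      · rw [if_neg ht]; ring
  )

lemma Q0cond2 (k : ℕ) (c d : ℂ) :
    ∀ j, 1 ≤ j → j ≤ k + 1 →
      Q0 k c d (ff (k+2) (k+2) j) = (-Complex.I) • ff (k+1) (k+1) j := by
  intro j hj1 hj2
  (
    funext s
    cases s with
    | inl t =>
      rw [show ((-Complex.I) • ff (k+1) (k+1) j) (Sum.inl t) = -Complex.I * 0 from rfl]
      rw [Q0_inl]
      rw [show (ff (k+2) (k+2) j) (Sum.inl ⟨(t:ℕ)+1, by omega⟩) = 0 from rfl]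
    | inr t =>
      rw [show ((-Complex.I) • ff (k+1) (k+1) j) (Sum.inr t)
          = -Complex.I * (if (t:ℕ) + 1 = j then 1 else 0) from rfl]
      rw [Q0_inr]
      rw [show (ff (k+2) (k+2) j) (Sum.inr ⟨(t:ℕ), by omega⟩)
          = (if (t:ℕ) + 1 = j then 1 else 0) from rfl]
      rw [show (ff (k+2) (k+2) j) (Sum.inl ⟨(t:ℕ), by omega⟩) = 0 from rfl]
      ring
  )

lemma Q0cond3 (k : ℕ) (c d : ℂ) (hc : c ≠ 0) :
    ∀ u ∈ Submodule.span ℂ {c • ee (k+2) (k+2) 1 + d • ff (k+2) (k+2) 1},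
      Q0 k c d u = 0 := by
  intro u hu
  (
    obtain ⟨t, rfl⟩ := Submodule.mem_span_singleton.1 hu
    rw [map_smul]
    have h0 : Q0 k c d (c • ee (k+2) (k+2) 1 + d • ff (k+2) (k+2) 1) = 0 := by
      funext s
      cases s with
      | inl t =>
        rw [Q0_inl, Pi.add_apply, Pi.smul_apply, Pi.smul_apply, smul_eq_mul, smul_eq_mul]
        rw [show (ee (k+2) (k+2) 1) (Sum.inl ⟨(t:ℕ)+1, by omega⟩)
            = (if (t:ℕ) + 1 + 1 = 1 then 1 else 0) from rfl]
        rw [show (ff (k+2) (k+2) 1) (Sum.inl ⟨(t:ℕ)+1, by omega⟩) = 0 from rfl]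
        rw [if_neg (by omega)]
        simp
      | inr t =>
        rw [Q0_inr, Pi.add_apply, Pi.add_apply, Pi.smul_apply, Pi.smul_apply, Pi.smul_apply,
          Pi.smul_apply, smul_eq_mul, smul_eq_mul, smul_eq_mul, smul_eq_mul]
        rw [show (ee (k+2) (k+2) 1) (Sum.inr ⟨(t:ℕ), by omega⟩) = 0 from rfl]
        rw [show (ff (k+2) (k+2) 1) (Sum.inr ⟨(t:ℕ), by omega⟩)
            = (if (t:ℕ) + 1 = 1 then 1 else 0) from rfl]
        rw [show (ee (k+2) (k+2) 1) (Sum.inl ⟨(t:ℕ), by omega⟩)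
            = (if (t:ℕ) + 1 = 1 then 1 else 0) from rfl]
        rw [show (ff (k+2) (k+2) 1) (Sum.inl ⟨(t:ℕ), by omega⟩) = 0 from rfl]
        by_cases ht : (t:ℕ) + 1 = 1
        · rw [if_pos ht]; field_simp; ring_nf; simp
        · rw [if_neg ht]; simp
    rw [h0, smul_zero]
  )

lemma Q0cond (k : ℕ) (c d : ℂ) (hc : c ≠ 0) : QCondII1 (k+2) c d (Q0 k c d) :=
  ⟨Q0cond1 k c d, Q0cond2 k c d, Q0cond3 k c d hc⟩

lemma sum_pick' (N : ℕ) (g : ℕ → ℂ) (t : ℕ) :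
    ∑ j ∈ Finset.range N, g j * (if t = j + 1 then 1 else 0)
      = if 1 ≤ t ∧ t - 1 < N then g (t-1) else 0 := by
  split
  · next h =>
    rw [Finset.sum_eq_single_of_mem (t-1) (Finset.mem_range.2 h.2)]
    · rw [if_pos (by omega)]; ring
    · intro b _ hb; rw [if_neg (by omega), mul_zero]
  · next h =>
    apply Finset.sum_eq_zero; intro b hb
    have := Finset.mem_range.1 hb
    rw [if_neg (by omega), mul_zero]
lemma Qval (k : ℕ) (c d : ℂ) (hc : c ≠ 0)
    (Q : V (k+2) (k+2) →ₗ[ℂ] V (k+1) (k+1))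
    (h1 : ∀ j, 1 ≤ j → j ≤ k + 1 →
      Q (ee (k+2) (k+2) (j+1) + (d/c) • ff (k+2) (k+2) (j+1)) = (-Complex.I) • ee (k+1) (k+1) j)
    (h2 : ∀ j, 1 ≤ j → j ≤ k + 1 →
      Q (ff (k+2) (k+2) j) = (-Complex.I) • ff (k+1) (k+1) j)
    (h3 : ∀ u ∈ Submodule.span ℂ {c • ee (k+2) (k+2) 1 + d • ff (k+2) (k+2) 1}, Q u = 0)
    (u : V (k+2) (k+2)) (hu : c * frc u (k+1) = d * elc u (k+1)) :
    (∀ t : Fin (k+1), Q u (Sum.inl t) = -Complex.I * elc u ((t:ℕ)+1)) ∧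
    (∀ t : Fin (k+1), Q u (Sum.inr t)
        = -Complex.I * frc u (t:ℕ) + (d/c) * Complex.I * elc u (t:ℕ)) := by
  have hrepr : u =
      (∑ j ∈ Finset.range (k+1),
        elc u (j+1) • (ee (k+2) (k+2) (j+1+1) + (d/c) • ff (k+2) (k+2) (j+1+1)))
      + (∑ j ∈ Finset.range (k+1), (frc u j - (d/c) * elc u j) • ff (k+2) (k+2) (j+1))
      + (elc u 0 / c) • (c • ee (k+2) (k+2) 1 + d • ff (k+2) (k+2) 1) := by
    funext s
    rw [Pi.add_apply, Pi.add_apply, Finset.sum_apply, Finset.sum_apply]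
    cases s with
    | inl i =>
      have e1 : ∑ j ∈ Finset.range (k+1),
          (elc u (j+1) • (ee (k+2) (k+2) (j+1+1) + (d/c) • ff (k+2) (k+2) (j+1+1))) (Sum.inl i)
          = if 1 ≤ (i:ℕ) ∧ (i:ℕ) - 1 < k+1 then elc u ((i:ℕ)-1+1) else 0 := by
        rw [← sum_pick' (k+1) (fun j => elc u (j+1)) (i:ℕ)]
        apply Finset.sum_congr rfl
        intro j hj
        rw [show (elc u (j+1) • (ee (k+2) (k+2) (j+1+1) + (d/c) • ff (k+2) (k+2) (j+1+1))) (Sum.inl i)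
            = elc u (j+1) * ((if (i:ℕ)+1 = j+1+1 then 1 else 0) + (d/c) * 0) from rfl]
        rw [if_congr (by omega : ((i:ℕ)+1 = j+1+1) ↔ ((i:ℕ) = j+1)) rfl rfl]
        ring
      have e2 : ∑ j ∈ Finset.range (k+1),
          ((frc u j - (d/c) * elc u j) • ff (k+2) (k+2) (j+1)) (Sum.inl i) = 0 := by
        apply Finset.sum_eq_zero; intro j hj
        rw [show ((frc u j - (d/c) * elc u j) • ff (k+2) (k+2) (j+1)) (Sum.inl i)
            = (frc u j - (d/c) * elc u j) * 0 from rfl]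
        ring
      rw [e1, e2, add_zero]
      rw [show ((elc u 0 / c) • (c • ee (k+2) (k+2) 1 + d • ff (k+2) (k+2) 1)) (Sum.inl i)
          = (elc u 0 / c) * (c * (if (i:ℕ)+1 = 1 then 1 else 0) + d * 0) from rfl]
      by_cases hi : 1 ≤ (i:ℕ)
      · rw [if_pos ⟨hi, by omega⟩, if_neg (by omega), show (i:ℕ)-1+1 = (i:ℕ) from by omega,
          elc_fin u i]
        ring
      · rw [if_neg (by omega), if_pos (by omega), elc_fin u i,
          show (i:ℕ) = 0 from by omega]
        field_simp
        ring
    | inr i =>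
      have e1 : ∑ j ∈ Finset.range (k+1),
          (elc u (j+1) • (ee (k+2) (k+2) (j+1+1) + (d/c) • ff (k+2) (k+2) (j+1+1))) (Sum.inr i)
          = if 1 ≤ (i:ℕ) ∧ (i:ℕ) - 1 < k+1 then elc u ((i:ℕ)-1+1) * (d/c) else 0 := by
        rw [← sum_pick' (k+1) (fun j => elc u (j+1) * (d/c)) (i:ℕ)]
        apply Finset.sum_congr rfl
        intro j hj
        rw [show (elc u (j+1) • (ee (k+2) (k+2) (j+1+1) + (d/c) • ff (k+2) (k+2) (j+1+1))) (Sum.inr i)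
            = elc u (j+1) * (0 + (d/c) * (if (i:ℕ)+1 = j+1+1 then 1 else 0)) from rfl]
        rw [if_congr (by omega : ((i:ℕ)+1 = j+1+1) ↔ ((i:ℕ) = j+1)) rfl rfl]
        ring
      have e2 : ∑ j ∈ Finset.range (k+1),
          ((frc u j - (d/c) * elc u j) • ff (k+2) (k+2) (j+1)) (Sum.inr i)
          = if (i:ℕ) < k+1 then frc u (i:ℕ) - (d/c) * elc u (i:ℕ) else 0 := by
        rw [← sum_pick (k+1) (fun j => frc u j - (d/c) * elc u j) (i:ℕ)]
        apply Finset.sum_congr rfl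
        intro j hj
        rw [show ((frc u j - (d/c) * elc u j) • ff (k+2) (k+2) (j+1)) (Sum.inr i)
            = (frc u j - (d/c) * elc u j) * (if (i:ℕ)+1 = j+1 then 1 else 0) from rfl]
        rw [if_congr (by omega : ((i:ℕ)+1 = j+1) ↔ ((i:ℕ) = j)) rfl rfl]
      rw [e1, e2]
      rw [show ((elc u 0 / c) • (c • ee (k+2) (k+2) 1 + d • ff (k+2) (k+2) 1)) (Sum.inr i)
          = (elc u 0 / c) * (c * 0 + d * (if (i:ℕ)+1 = 1 then 1 else 0)) from rfl]
      rcases Nat.lt_or_ge (i:ℕ) 1 with hi | hi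
      · rw [if_neg (by omega), if_pos (by omega), if_pos (by omega), frc_fin u i,
          show (i:ℕ) = 0 from by omega]
        field_simp
        ring
      · rcases Nat.lt_or_ge (i:ℕ) (k+1) with hik | hik
        · rw [if_pos ⟨hi, by omega⟩, if_pos hik, if_neg (by omega),
            show (i:ℕ)-1+1 = (i:ℕ) from by omega, frc_fin u i]
          ring
        · have hieq : (i:ℕ) = k+1 := by omega
          rw [if_pos ⟨hi, by omega⟩, if_neg (by omega), if_neg (by omega),
            show (i:ℕ)-1+1 = (i:ℕ) from by omega, frc_fin u i, hieq]
          have : frc u (k+1) = d * elc u (k+1) / c := by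
            field_simp
            linear_combination hu
          rw [this]
          ring
  have hQu : Q u =
      (∑ j ∈ Finset.range (k+1), elc u (j+1) • ((-Complex.I) • ee (k+1) (k+1) (j+1)))
      + (∑ j ∈ Finset.range (k+1),
          (frc u j - (d/c) * elc u j) • ((-Complex.I) • ff (k+1) (k+1) (j+1))) := by
    conv_lhs => rw [hrepr]
    rw [map_add, map_add,
      h3 _ (Submodule.smul_mem _ _ (Submodule.mem_span_singleton_self _)), add_zero,
      map_sum, map_sum]
    congr 1
    · apply Finset.sum_congr rfl
      intro j hj
      rw [map_smul, h1 (j+1) (by omega) (by have := Finset.mem_range.1 hj; omega)]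
    · apply Finset.sum_congr rfl
      intro j hj
      rw [map_smul, h2 (j+1) (by omega) (by have := Finset.mem_range.1 hj; omega)]
  constructor
  · intro t
    rw [hQu, Pi.add_apply, Finset.sum_apply, Finset.sum_apply]
    have e2 : ∑ j ∈ Finset.range (k+1),
        ((frc u j - (d/c) * elc u j) • ((-Complex.I) • ff (k+1) (k+1) (j+1))) (Sum.inl t) = 0 := by
      apply Finset.sum_eq_zero; intro j hj
      rw [show ((frc u j - (d/c) * elc u j) • ((-Complex.I) • ff (k+1) (k+1) (j+1))) (Sum.inl t)
          = (frc u j - (d/c) * elc u j) * (-Complex.I * 0) from rfl]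
      ring
    have e1 : ∑ j ∈ Finset.range (k+1),
        (elc u (j+1) • ((-Complex.I) • ee (k+1) (k+1) (j+1))) (Sum.inl t)
        = if (t:ℕ) < k+1 then elc u ((t:ℕ)+1) * -Complex.I else 0 := by
      rw [← sum_pick (k+1) (fun j => elc u (j+1) * -Complex.I) (t:ℕ)]
      apply Finset.sum_congr rfl
      intro j hj
      rw [show (elc u (j+1) • ((-Complex.I) • ee (k+1) (k+1) (j+1))) (Sum.inl t)
          = elc u (j+1) * (-Complex.I * (if (t:ℕ)+1 = j+1 then 1 else 0)) from rfl]
      rw [if_congr (by omega : ((t:ℕ)+1 = j+1) ↔ ((t:ℕ) = j)) rfl rfl]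
      ring
    rw [e1, e2, add_zero, if_pos t.isLt]
    ring
  · intro t
    rw [hQu, Pi.add_apply, Finset.sum_apply, Finset.sum_apply]
    have e1 : ∑ j ∈ Finset.range (k+1),
        (elc u (j+1) • ((-Complex.I) • ee (k+1) (k+1) (j+1))) (Sum.inr t) = 0 := by
      apply Finset.sum_eq_zero; intro j hj
      rw [show (elc u (j+1) • ((-Complex.I) • ee (k+1) (k+1) (j+1))) (Sum.inr t)
          = elc u (j+1) * (-Complex.I * 0) from rfl]
      ring
    have e2 : ∑ j ∈ Finset.range (k+1),
        ((frc u j - (d/c) * elc u j) • ((-Complex.I) • ff (k+1) (k+1) (j+1))) (Sum.inr t)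
        = if (t:ℕ) < k+1 then (frc u (t:ℕ) - (d/c) * elc u (t:ℕ)) * -Complex.I else 0 := by
      rw [← sum_pick (k+1) (fun j => (frc u j - (d/c) * elc u j) * -Complex.I) (t:ℕ)]
      apply Finset.sum_congr rfl
      intro j hj
      rw [show ((frc u j - (d/c) * elc u j) • ((-Complex.I) • ff (k+1) (k+1) (j+1))) (Sum.inr t)
          = (frc u j - (d/c) * elc u j) * (-Complex.I * (if (t:ℕ)+1 = j+1 then 1 else 0)) from rfl]
      rw [if_congr (by omega : ((t:ℕ)+1 = j+1) ↔ ((t:ℕ) = j)) rfl rfl]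
      ring
    rw [e1, e2, zero_add, if_pos t.isLt]
    ring
section fin
variable (k : ℕ) (c d : ℂ) (hc : c ≠ 0) (Q : V (k+2) (k+2) →ₗ[ℂ] V (k+1) (k+1))
variable (h1 : ∀ j, 1 ≤ j → j ≤ k + 1 →
      Q (ee (k+2) (k+2) (j+1) + (d/c) • ff (k+2) (k+2) (j+1)) = (-Complex.I) • ee (k+1) (k+1) j)
variable (h2 : ∀ j, 1 ≤ j → j ≤ k + 1 →
      Q (ff (k+2) (k+2) j) = (-Complex.I) • ff (k+1) (k+1) j)
variable (h3 : ∀ u ∈ Submodule.span ℂ {c • ee (k+2) (k+2) 1 + d • ff (k+2) (k+2) 1}, Q u = 0)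

include h1 h2 h3 hc

lemma finA (u : V (k+2) (k+2)) (hu : c * frc u (k+1) = d * elc u (k+1)) (h0 : Q u = 0) :
    u ∈ Submodule.span ℂ {c • ee (k+2) (k+2) 1 + d • ff (k+2) (k+2) 1} := by
  obtain ⟨qe, qf⟩ := Qval k c d hc Q h1 h2 h3 u hu
  have he : ∀ s, 1 ≤ s → s ≤ k + 1 → elc u s = 0 := by
    intro s hs1 hs2
    have := qe ⟨s-1, by omega⟩
    rw [h0] at this
    simp only [Pi.zero_apply] at this
    have h' : -Complex.I * elc u (s-1+1) = 0 := this.symm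
    rw [show s - 1 + 1 = s from by omega] at h'
    rcases mul_eq_zero.1 h' with h | h
    · exact absurd (neg_eq_zero.1 h) Complex.I_ne_zero
    · exact h
  have hf : ∀ s, s ≤ k → frc u s = (d/c) * elc u s := by
    intro s hs
    have := qf ⟨s, by omega⟩
    rw [h0] at this
    simp only [Pi.zero_apply] at this
    have h' : -Complex.I * frc u s + (d/c) * Complex.I * elc u s = 0 := this.symm
    have h'' : Complex.I * (frc u s - (d/c) * elc u s) = 0 := by linear_combination -h'
    rcases mul_eq_zero.1 h'' with h | h
    · exact absurd h Complex.I_ne_zero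
    · exact sub_eq_zero.1 h
  rw [Submodule.mem_span_singleton]
  refine ⟨elc u 0 / c, ?_⟩
  funext s
  cases s with
  | inl i =>
    rw [show ((elc u 0 / c) • (c • ee (k+2) (k+2) 1 + d • ff (k+2) (k+2) 1)) (Sum.inl i)
        = (elc u 0 / c) * (c * (if (i:ℕ)+1 = 1 then 1 else 0) + d * 0) from rfl]
    rcases Nat.lt_or_ge (i:ℕ) 1 with hi | hi
    · rw [if_pos (by omega), elc_fin u i, show (i:ℕ) = 0 from by omega]
      field_simp
      ring
    · rw [if_neg (by omega), elc_fin u i, he (i:ℕ) hi (by have := i.isLt; omega)]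
      ring
  | inr i =>
    rw [show ((elc u 0 / c) • (c • ee (k+2) (k+2) 1 + d • ff (k+2) (k+2) 1)) (Sum.inr i)
        = (elc u 0 / c) * (c * 0 + d * (if (i:ℕ)+1 = 1 then 1 else 0)) from rfl]
    rcases Nat.lt_or_ge (i:ℕ) 1 with hi | hi
    · rw [if_pos (by omega), frc_fin u i, show (i:ℕ) = 0 from by omega, hf 0 (by omega)]
      field_simp
      ring
    · rw [if_neg (by omega), frc_fin u i]
      rcases Nat.lt_or_ge (i:ℕ) (k+1) with hik | hik
      · rw [hf (i:ℕ) (by omega), he (i:ℕ) hi (by omega)]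
        ring
      · have hieq : (i:ℕ) = k + 1 := by have := i.isLt; omega
        rw [hieq]
        have : frc u (k+1) = d * elc u (k+1) / c := by field_simp; linear_combination hu
        rw [this, he (k+1) (by omega) (by omega)]
        ring
end fin

section finB
variable (k : ℕ) (c d : ℂ) (hc : c ≠ 0) (Q : V (k+2) (k+2) →ₗ[ℂ] V (k+1) (k+1))
variable (h1 : ∀ j, 1 ≤ j → j ≤ k + 1 →
      Q (ee (k+2) (k+2) (j+1) + (d/c) • ff (k+2) (k+2) (j+1)) = (-Complex.I) • ee (k+1) (k+1) j)
variable (h2 : ∀ j, 1 ≤ j → j ≤ k + 1 →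
      Q (ff (k+2) (k+2) j) = (-Complex.I) • ff (k+1) (k+1) j)
variable (h3 : ∀ u ∈ Submodule.span ℂ {c • ee (k+2) (k+2) 1 + d • ff (k+2) (k+2) 1}, Q u = 0)

include h1 h2 h3 hc

lemma finB (w : V (k+1) (k+1)) :
    ∃ u : V (k+2) (k+2), c * frc u (k+1) = d * elc u (k+1) ∧ Q u = w := by
  set u : V (k+2) (k+2) := Sum.elim
    (fun i : Fin (k+2) => if h : 1 ≤ (i:ℕ) then
        Complex.I * w (Sum.inl ⟨(i:ℕ)-1, by have := i.isLt; omega⟩) else 0)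
    (fun i : Fin (k+2) => (d/c) * (if h : 1 ≤ (i:ℕ) then
        Complex.I * w (Sum.inl ⟨(i:ℕ)-1, by have := i.isLt; omega⟩) else 0)
      + (if h : (i:ℕ) < k+1 then Complex.I * w (Sum.inr ⟨(i:ℕ), h⟩) else 0)) with hudef
  have hel : ∀ j (hj1 : 1 ≤ j) (hj2 : j < k+2),
      elc u j = Complex.I * w (Sum.inl ⟨j-1, by omega⟩) := by
    intro j hj1 hj2
    rw [elc, dif_pos hj2, hudef]
    simp only [Sum.elim_inl]
    rw [dif_pos hj1]
  have hel0 : elc u 0 = 0 := by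
    rw [elc, dif_pos (by omega : 0 < k+2), hudef]
    simp only [Sum.elim_inl]
    rw [dif_neg (by omega)]
  have hfr : ∀ j (hj : j < k+2),
      frc u j = (d/c) * (if h : 1 ≤ j then Complex.I * w (Sum.inl ⟨j-1, by omega⟩) else 0)
        + (if h : j < k+1 then Complex.I * w (Sum.inr ⟨j, h⟩) else 0) := by
    intro j hj
    rw [frc, dif_pos hj, hudef]
    simp only [Sum.elim_inr]
  have hhyp : c * frc u (k+1) = d * elc u (k+1) := by
    rw [hfr (k+1) (by omega), hel (k+1) (by omega) (by omega),
      dif_pos (by omega : 1 ≤ k+1), dif_neg (by omega : ¬ (k+1 < k+1))]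
    field_simp
    try ring
  refine ⟨u, hhyp, ?_⟩
  obtain ⟨qe, qf⟩ := Qval k c d hc Q h1 h2 h3 u hhyp
  have hI : Complex.I * Complex.I = -1 := Complex.I_mul_I
  funext s
  cases s with
  | inl t =>
    rw [qe t, hel ((t:ℕ)+1) (by omega) (by have := t.isLt; omega)]
    have : (⟨(t:ℕ)+1-1, by have := t.isLt; omega⟩ : Fin (k+1)) = t := by
      apply Fin.ext; simp
    rw [this]
    linear_combination (-(w (Sum.inl t))) * hI
  | inr t =>
    rw [qf t]
    rcases Nat.lt_or_ge (t:ℕ) 1 with ht | ht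
    · have ht0 : (t:ℕ) = 0 := by omega
      rw [ht0, hfr 0 (by omega), hel0,
        dif_neg (by omega : ¬ 1 ≤ 0), dif_pos (by omega : 0 < k+1)]
      have : (⟨0, by omega⟩ : Fin (k+1)) = t := by apply Fin.ext; simp [ht0.symm]
      rw [this]
      linear_combination (-(w (Sum.inr t))) * hI
    · rw [hfr (t:ℕ) (by have := t.isLt; omega), hel (t:ℕ) ht (by have := t.isLt; omega),
        dif_pos ht, dif_pos t.isLt]
      have : (⟨(t:ℕ), t.isLt⟩ : Fin (k+1)) = t := by apply Fin.ext; simp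
      rw [this]
      linear_combination (-(w (Sum.inr t))) * hI
end finB
section finD
variable (k : ℕ) (c d : ℂ) (hc : c ≠ 0) (Q : V (k+2) (k+2) →ₗ[ℂ] V (k+1) (k+1))
variable (h1 : ∀ j, 1 ≤ j → j ≤ k + 1 →
      Q (ee (k+2) (k+2) (j+1) + (d/c) • ff (k+2) (k+2) (j+1)) = (-Complex.I) • ee (k+1) (k+1) j)
variable (h2 : ∀ j, 1 ≤ j → j ≤ k + 1 →
      Q (ff (k+2) (k+2) j) = (-Complex.I) • ff (k+1) (k+1) j)
variable (h3 : ∀ u ∈ Submodule.span ℂ {c • ee (k+2) (k+2) 1 + d • ff (k+2) (k+2) 1}, Q u = 0)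

include h1 h2 h3 hc

lemma finD (u : V (k+2) (k+2)) (hu : c * frc u (k+1) = d * elc u (k+1)) :
    Q (xmap (k+2) (k+2) u) = xmap (k+1) (k+1) (Q u) := by
  have xel : ∀ j, elc (xmap (k+2) (k+2) u) j = if j + 1 < k + 2 then elc u (j+1) else 0 := by
    intro j
    rcases Nat.lt_or_ge j (k+2) with hj | hj
    · rw [elc, dif_pos hj]
      rw [show (xmap (k+2) (k+2) u) (Sum.inl ⟨j, hj⟩)
          = if h : j + 1 < k + 2 then u (Sum.inl ⟨j+1, h⟩) else 0 from rfl]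
      split
      · next h => rw [elc, dif_pos h]
      · next h => rfl
    · rw [elc, dif_neg (by omega), if_neg (by omega)]
  have xfr : ∀ j, frc (xmap (k+2) (k+2) u) j = if j + 1 < k + 2 then frc u (j+1) else 0 := by
    intro j
    rcases Nat.lt_or_ge j (k+2) with hj | hj
    · rw [frc, dif_pos hj]
      rw [show (xmap (k+2) (k+2) u) (Sum.inr ⟨j, hj⟩)
          = if h : j + 1 < k + 2 then u (Sum.inr ⟨j+1, h⟩) else 0 from rfl]
      split
      · next h => rw [frc, dif_pos h]
      · next h => rfl
    · rw [frc, dif_neg (by omega), if_neg (by omega)]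
  have hxu : c * frc (xmap (k+2) (k+2) u) (k+1) = d * elc (xmap (k+2) (k+2) u) (k+1) := by
    rw [xel, xfr, if_neg (by omega), if_neg (by omega)]
    ring
  obtain ⟨qe, qf⟩ := Qval k c d hc Q h1 h2 h3 u hu
  obtain ⟨qe', qf'⟩ := Qval k c d hc Q h1 h2 h3 (xmap (k+2) (k+2) u) hxu
  funext s
  cases s with
  | inl t =>
    have hlt := t.isLt
    rcases Nat.lt_or_ge ((t:ℕ)+1) (k+1) with h | h
    · rw [qe' t, xel, if_pos (by omega),
        show (xmap (k+1) (k+1) (Q u)) (Sum.inl t)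
          = if h : (t:ℕ) + 1 < k + 1 then Q u (Sum.inl ⟨(t:ℕ)+1, h⟩) else 0 from rfl,
        dif_pos h, qe ⟨(t:ℕ)+1, h⟩]
    · rw [qe' t, xel, if_neg (by omega),
        show (xmap (k+1) (k+1) (Q u)) (Sum.inl t)
          = if h : (t:ℕ) + 1 < k + 1 then Q u (Sum.inl ⟨(t:ℕ)+1, h⟩) else 0 from rfl,
        dif_neg (by omega), mul_zero]
  | inr t =>
    have hlt := t.isLt
    rcases Nat.lt_or_ge ((t:ℕ)+1) (k+1) with h | h
    · rw [qf' t, xfr, xel, if_pos (by omega), if_pos (by omega),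
        show (xmap (k+1) (k+1) (Q u)) (Sum.inr t)
          = if h : (t:ℕ) + 1 < k + 1 then Q u (Sum.inr ⟨(t:ℕ)+1, h⟩) else 0 from rfl,
        dif_pos h, qf ⟨(t:ℕ)+1, h⟩]
    · rw [qf' t, xfr, xel, if_pos (by omega), if_pos (by omega),
        show (xmap (k+1) (k+1) (Q u)) (Sum.inr t)
          = if h : (t:ℕ) + 1 < k + 1 then Q u (Sum.inr ⟨(t:ℕ)+1, h⟩) else 0 from rfl,
        dif_neg (by omega)]
      have ht : (t:ℕ) = k := by omega
      have hfr2 : frc u (k+1) = d * elc u (k+1) / c := by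
        field_simp
        linear_combination hu
      rw [ht, hfr2]
      ring
end finD
section finC
variable (k : ℕ) (hk : Even k) (c d : ℂ) (hc : c ≠ 0) (Q : V (k+2) (k+2) →ₗ[ℂ] V (k+1) (k+1))
variable (h1 : ∀ j, 1 ≤ j → j ≤ k + 1 →
      Q (ee (k+2) (k+2) (j+1) + (d/c) • ff (k+2) (k+2) (j+1)) = (-Complex.I) • ee (k+1) (k+1) j)
variable (h2 : ∀ j, 1 ≤ j → j ≤ k + 1 →
      Q (ff (k+2) (k+2) j) = (-Complex.I) • ff (k+1) (k+1) j)
variable (h3 : ∀ u ∈ Submodule.span ℂ {c • ee (k+2) (k+2) 1 + d • ff (k+2) (k+2) 1}, Q u = 0)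

include h1 h2 h3 hc hk

lemma finC (u v : V (k+2) (k+2)) (hu : c * frc u (k+1) = d * elc u (k+1))
    (hv : c * frc v (k+1) = d * elc v (k+1)) :
    beta (k+1) (k+1) (Q u) (Q v) = beta (k+2) (k+2) u v := by
  obtain ⟨que, quf⟩ := Qval k c d hc Q h1 h2 h3 u hu
  obtain ⟨qve, qvf⟩ := Qval k c d hc Q h1 h2 h3 v hv
  have qelu : ∀ j, j < k+1 → elc (Q u) j = -Complex.I * elc u (j+1) := by
    intro j hj; rw [elc, dif_pos hj]; exact que ⟨j, hj⟩
  have qfru : ∀ j, j < k+1 →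
      frc (Q u) j = -Complex.I * frc u j + (d/c) * Complex.I * elc u j := by
    intro j hj; rw [frc, dif_pos hj]; exact quf ⟨j, hj⟩
  have qelv : ∀ j, j < k+1 → elc (Q v) j = -Complex.I * elc v (j+1) := by
    intro j hj; rw [elc, dif_pos hj]; exact qve ⟨j, hj⟩
  have qfrv : ∀ j, j < k+1 →
      frc (Q v) j = -Complex.I * frc v j + (d/c) * Complex.I * elc v j := by
    intro j hj; rw [frc, dif_pos hj]; exact qvf ⟨j, hj⟩
  have hI : Complex.I * Complex.I = -1 := Complex.I_mul_I
  rw [beta_sq k (Q u) (Q v), beta_sq (k+1) u v]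
  have e0 : ∀ i ∈ Finset.range (k+1),
      (-1:ℂ)^i * elc (Q u) i * frc (Q v) (k-i) + (-1)^(k-i) * frc (Q u) i * elc (Q v) (k-i)
      = (-((-1:ℂ)^i * elc u (i+1) * frc v (k-i)) + (d/c) * ((-1)^i * elc u (i+1) * elc v (k-i)))
        + (-((-1:ℂ)^i * frc u i * elc v (k-i+1)) + (d/c) * ((-1)^i * elc u i * elc v (k-i+1))) := by
    intro i hi
    have hik : i < k + 1 := Finset.mem_range.1 hi
    have hpow : ((-1:ℂ))^(k-i) = (-1)^i := by
      have ha : ((-1:ℂ))^(k-i) * (-1)^i = 1 := by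
        rw [← pow_add, show k-i+i = k from by omega]
        exact hk.neg_one_pow
      have hb : ((-1:ℂ))^i * (-1)^i = 1 := by
        rw [← pow_add]
        exact Even.neg_one_pow ⟨i, rfl⟩
      exact mul_right_cancel₀ (pow_ne_zero i (by norm_num)) (ha.trans hb.symm)
    rw [qelu i hik, qfru i hik, qelv (k-i) (by omega), qfrv (k-i) (by omega), hpow]
    linear_combination ((-1:ℂ)^i * (elc u (i+1) * frc v (k-i) - (d/c) * elc u (i+1) * elc v (k-i)
      + frc u i * elc v (k-i+1) - (d/c) * elc u i * elc v (k-i+1))) * hI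
  rw [Finset.sum_congr rfl e0, Finset.sum_add_distrib, Finset.sum_add_distrib,
    Finset.sum_add_distrib, Finset.sum_neg_distrib, Finset.sum_neg_distrib,
    ← Finset.mul_sum, ← Finset.mul_sum]
  have e0' : ∀ i ∈ Finset.range (k+2),
      (-1:ℂ)^i * elc u i * frc v (k+1-i) + (-1)^(k+1-i) * frc u i * elc v (k+1-i)
      = (-1:ℂ)^i * elc u i * frc v (k+1-i) - (-1)^i * frc u i * elc v (k+1-i) := by
    intro i hi
    have hik : i < k + 2 := Finset.mem_range.1 hi
    have hpow : ((-1:ℂ))^(k+1-i) = -(-1)^i := by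
      have ha : ((-1:ℂ))^(k+1-i) * (-1)^i = -1 := by
        rw [← pow_add, show k+1-i+i = k+1 from by omega]
        exact (hk.add_one).neg_one_pow
      have hb : (-((-1:ℂ))^i) * (-1)^i = -1 := by
        rw [neg_mul, ← pow_add]
        rw [(Even.neg_one_pow ⟨i, rfl⟩ : ((-1:ℂ))^(i+i) = 1)]
      exact mul_right_cancel₀ (pow_ne_zero i (by norm_num)) (ha.trans hb.symm)
    rw [hpow]
    ring
  rw [Finset.sum_congr rfl e0', Finset.sum_sub_distrib]
  have hA : ∑ i ∈ Finset.range (k+2), (-1:ℂ)^i * elc u i * frc v (k+1-i)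
      = -(∑ j ∈ Finset.range (k+1), (-1:ℂ)^j * elc u (j+1) * frc v (k-j))
        + elc u 0 * frc v (k+1) := by
    rw [Finset.sum_range_succ']
    congr 1
    · rw [← Finset.sum_neg_distrib]
      apply Finset.sum_congr rfl
      intro j hj
      have := Finset.mem_range.1 hj
      rw [show k+1-(j+1) = k-j from by omega, pow_succ]
      ring
    · norm_num
  have hB : ∑ i ∈ Finset.range (k+2), (-1:ℂ)^i * frc u i * elc v (k+1-i)
      = (∑ j ∈ Finset.range (k+1), (-1:ℂ)^j * frc u j * elc v (k-j+1))
        + -(frc u (k+1) * elc v 0) := by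
    rw [Finset.sum_range_succ]
    congr 1
    · apply Finset.sum_congr rfl
      intro j hj
      have := Finset.mem_range.1 hj
      rw [show k+1-j = k-j+1 from by omega]
    · rw [(hk.add_one).neg_one_pow, Nat.sub_self]
      ring
  have hC : ∑ j ∈ Finset.range (k+1), (-1:ℂ)^j * elc u j * elc v (k-j+1)
      = -(∑ j ∈ Finset.range k, (-1:ℂ)^j * elc u (j+1) * elc v (k-j))
        + elc u 0 * elc v (k+1) := by
    rw [Finset.sum_range_succ']
    congr 1
    · rw [← Finset.sum_neg_distrib]
      apply Finset.sum_congr rfl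
      intro j hj
      have := Finset.mem_range.1 hj
      rw [show k-(j+1)+1 = k-j from by omega, pow_succ]
      ring
    · rw [Nat.sub_zero]
      norm_num
  have hD : ∑ j ∈ Finset.range (k+1), (-1:ℂ)^j * elc u (j+1) * elc v (k-j)
      = (∑ j ∈ Finset.range k, (-1:ℂ)^j * elc u (j+1) * elc v (k-j))
        + elc u (k+1) * elc v 0 := by
    rw [Finset.sum_range_succ, hk.neg_one_pow, Nat.sub_self]
    ring
  rw [hA, hB, hC, hD]
  have h5 : frc v (k+1) = d * elc v (k+1) / c := by field_simp; linear_combination hv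
  have h6 : frc u (k+1) = d * elc u (k+1) / c := by field_simp; linear_combination hu
  rw [h5, h6]
  ring
end finC
/-- Lemma 3.3(b), case `Q^II_1`.  For `λ = (m,m)` with `m ≥ 2` even,
`c ≠ 0`, and `W = ⟨c·e_1 + d·f_1⟩`: `W` is isotropic,
`W^⊥ = ⟨e_1, …, e_{m-1}, f_1, …, f_{m-1}, c·e_m + d·f_m⟩`, `W` and `W^⊥` are
`x_λ`-invariant, and the map `Q : W^⊥/W → V_(m-1,m-1)` determined by
`Q((e_{j+1} + (d/c)f_{j+1})+W) = -√-1·e_j`, `Q(f_j+W) = -√-1·f_j` is an isomorphism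
of quadratic spaces satisfying `Q ∘ x̄_λ = x_ν ∘ Q`. -/
theorem statement3 (m : ℕ) (hm : 2 ≤ m) (hme : Even m) (c d : ℂ) (hc : c ≠ 0) :
    Submodule.span ℂ {c • ee m m 1 + d • ff m m 1} ≤
      orth m m (Submodule.span ℂ {c • ee m m 1 + d • ff m m 1}) ∧
    orth m m (Submodule.span ℂ {c • ee m m 1 + d • ff m m 1}) =
      EF m m (m-1) (m-1) ⊔ Submodule.span ℂ {c • ee m m m + d • ff m m m} ∧
    (Submodule.span ℂ {c • ee m m 1 + d • ff m m 1}).map (xmap m m) ≤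
      Submodule.span ℂ {c • ee m m 1 + d • ff m m 1} ∧
    (orth m m (Submodule.span ℂ {c • ee m m 1 + d • ff m m 1})).map (xmap m m) ≤
      orth m m (Submodule.span ℂ {c • ee m m 1 + d • ff m m 1}) ∧
    (∃ Q : V m m →ₗ[ℂ] V (m-1) (m-1), QCondII1 m c d Q) ∧
    (∀ Q : V m m →ₗ[ℂ] V (m-1) (m-1), QCondII1 m c d Q →
      (∀ u ∈ orth m m (Submodule.span ℂ {c • ee m m 1 + d • ff m m 1}),
        Q u = 0 → u ∈ Submodule.span ℂ {c • ee m m 1 + d • ff m m 1}) ∧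
      (∀ w : V (m-1) (m-1),
        ∃ u ∈ orth m m (Submodule.span ℂ {c • ee m m 1 + d • ff m m 1}), Q u = w) ∧
      (∀ u ∈ orth m m (Submodule.span ℂ {c • ee m m 1 + d • ff m m 1}),
        ∀ v ∈ orth m m (Submodule.span ℂ {c • ee m m 1 + d • ff m m 1}),
        beta (m-1) (m-1) (Q u) (Q v) = beta m m u v) ∧
      (∀ u ∈ orth m m (Submodule.span ℂ {c • ee m m 1 + d • ff m m 1}),
        Q (xmap m m u) = xmap (m-1) (m-1) (Q u))) := by

  obtain ⟨k, rfl⟩ : ∃ k, m = k + 2 := ⟨m - 2, by omega⟩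
  have hk : Even k := by
    rcases hme with ⟨r, hr⟩
    exact ⟨r - 1, by omega⟩
  have hodd : Odd (k+1) := hk.add_one
  refine ⟨part1 (k+1) hodd c d, part2 (k+1) hodd c d hc, part3 (k+1) c d,
    part4 (k+1) hodd c d, ⟨Q0 k c d, Q0cond k c d hc⟩, ?_⟩
  intro Q hQ
  have h1 : ∀ j, 1 ≤ j → j ≤ k + 1 →
      Q (ee (k+2) (k+2) (j+1) + (d/c) • ff (k+2) (k+2) (j+1))
        = (-Complex.I) • ee (k+1) (k+1) j := hQ.1
  have h2 : ∀ j, 1 ≤ j → j ≤ k + 1 →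
      Q (ff (k+2) (k+2) j) = (-Complex.I) • ff (k+1) (k+1) j := hQ.2.1
  have h3 : ∀ u ∈ Submodule.span ℂ {c • ee (k+2) (k+2) 1 + d • ff (k+2) (k+2) 1}, Q u = 0 :=
    hQ.2.2
  refine ⟨?_, ?_, ?_, ?_⟩
  · intro u hu h0
    exact finA k c d hc Q h1 h2 h3 u ((mem_orth_w (k+1) hodd c d u).1 hu) h0
  · intro w
    obtain ⟨u, hu, hQu⟩ := finB k c d hc Q h1 h2 h3 w
    exact ⟨u, (mem_orth_w (k+1) hodd c d u).2 hu, hQu⟩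
  · intro u hu v hv
    exact finC k hk c d hc Q h1 h2 h3 u v ((mem_orth_w (k+1) hodd c d u).1 hu)
      ((mem_orth_w (k+1) hodd c d v).1 hv)
  · intro u hu
    exact finD k c d hc Q h1 h2 h3 u ((mem_orth_w (k+1) hodd c d u).1 hu)
end
end
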